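/- arXiv:2404.18123 — 9 statements merged into one kernel-verified Lean document; each statement's English description precedes it below -/
import Mathlib

section
/- Let a > 1, b > 1, and suppose (a_n), (b_n) are positive sequences with a_n * a^n → 1 and b_n * b^n → 1 as n → ∞. Let S(t) = ∑_{n=0}^∞ a_n exp(-b_n t) and P(t) = ∑_{i=-∞}^∞ a^{-i} exp(-b^{-i} t). Then S(t)/P(t) → 1 as t → ∞. -/
open Filter Real

noncomputable def Pterm (a b t : ℝ) (i : ℤ) : ℝ := a ^ (-i) * Real.exp (-(b ^ (-i)) * t)

noncomputable def Pfun (a b t : ℝ) : ℝ := ∑' i : ℤ, Pterm a b t i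

variable {a b : ℝ}

lemma Pterm_pos (ha : 0 < a) (b t : ℝ) (i : ℤ) : 0 < Pterm a b t i := by
  unfold Pterm; positivity

lemma sumP (ha : 1 < a) (hb : 1 < b) {t : ℝ} (ht : 0 < t) : Summable (Pterm a b t) := by
  have ha0 : (0:ℝ) < a := by linarith
  have hb0 : (0:ℝ) < b := by linarith
  apply Summable.of_nat_of_neg
  · -- ∑ n:ℕ, a^(-n) exp(-(b^(-n)) t) ≤ (a⁻¹)^n
    apply Summable.of_nonneg_of_le (fun n => (Pterm_pos ha0 b t n).le)
      (f := fun n : ℕ => (a⁻¹) ^ n) ?_ ?_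
    · intro n
      have h1 : a ^ (-(n:ℤ)) = (a⁻¹) ^ n := by
        rw [zpow_neg, zpow_natCast, inv_pow]
      have h2 : Real.exp (-(b ^ (-(n:ℤ))) * t) ≤ 1 := by
        rw [Real.exp_le_one_iff]
        have : (0:ℝ) < b ^ (-(n:ℤ)) := zpow_pos hb0 _
        nlinarith
      calc Pterm a b t n = a ^ (-(n:ℤ)) * Real.exp (-(b ^ (-(n:ℤ))) * t) := rfl
        _ ≤ a ^ (-(n:ℤ)) * 1 := by
            apply mul_le_mul_of_nonneg_left h2 (zpow_pos ha0 _).le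
        _ = (a⁻¹) ^ n := by rw [mul_one, h1]
    · exact summable_geometric_of_lt_one (by positivity) (by
        rw [inv_lt_one_iff₀]; right; exact ha)
  · -- ratio test for n ↦ a^n exp(-(b^n) t)
    have key : ∀ n : ℕ, Pterm a b t (-(n:ℤ)) = a ^ n * Real.exp (-(b ^ n) * t) := by
      intro n; unfold Pterm; rw [neg_neg, zpow_natCast, zpow_natCast]
    apply summable_of_ratio_norm_eventually_le (r := 1/2) (by norm_num)
    have htend : Tendsto (fun n : ℕ => a * Real.exp (-(b ^ n * (b - 1) * t))) atTop (nhds 0) := by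
      have h1 : Tendsto (fun n : ℕ => b ^ n * (b - 1) * t) atTop atTop := by
        apply Tendsto.atTop_mul_const ht
        exact Tendsto.atTop_mul_const (by linarith) (tendsto_pow_atTop_atTop_of_one_lt hb)
      have := (Real.tendsto_exp_neg_atTop_nhds_zero.comp h1).const_mul a
      simpa using this
    filter_upwards [htend.eventually_le_const (show (0:ℝ) < 1/2 by norm_num)] with n hn
    rw [key, key]
    rw [Real.norm_eq_abs, Real.norm_eq_abs, abs_of_pos (by positivity), abs_of_pos (by positivity)]
    have hsplit : Real.exp (-(b ^ (n+1)) * t) =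
        Real.exp (-(b ^ n * (b-1) * t)) * Real.exp (-(b ^ n) * t) := by
      rw [← Real.exp_add]; ring_nf
    calc a ^ (n+1) * Real.exp (-(b ^ (n+1)) * t)
        = (a * Real.exp (-(b ^ n * (b-1) * t))) * (a ^ n * Real.exp (-(b ^ n) * t)) := by
          rw [hsplit]; ring
      _ ≤ (1/2) * (a ^ n * Real.exp (-(b ^ n) * t)) := by
          apply mul_le_mul_of_nonneg_right hn (by positivity)

lemma Ppos (ha : 1 < a) (hb : 1 < b) {t : ℝ} (ht : 0 < t) : 0 < Pfun a b t :=
  Summable.tsum_pos (sumP ha hb ht) (fun i => (Pterm_pos (by linarith) b t i).le) 0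
    (Pterm_pos (by linarith) b t 0)

lemma Pterm_le_Pfun (ha : 1 < a) (hb : 1 < b) {t : ℝ} (ht : 0 < t) (j : ℤ) :
    Pterm a b t j ≤ Pfun a b t :=
  Summable.le_tsum (sumP ha hb ht) j (fun i _ => (Pterm_pos (by linarith) b t i).le)

lemma Pscale (ha : 1 < a) (hb : 1 < b) (t : ℝ) : Pfun a b (b * t) = a⁻¹ * Pfun a b t := by
  have ha0 : a ≠ 0 := by positivity
  have hb0 : b ≠ 0 := by positivity
  have hterm : ∀ i : ℤ, Pterm a b (b * t) i = a⁻¹ * Pterm a b t (i - 1) := by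
    intro i
    unfold Pterm
    have h1 : b ^ (-i) * (b * t) = b ^ (-(i-1)) * t := by
      rw [show -(i-1) = -i + 1 by ring, zpow_add₀ hb0, zpow_one]; ring
    have h2 : a⁻¹ * a ^ (-(i-1)) = a ^ (-i) := by
      rw [show -(i-1) = -i + 1 by ring, zpow_add₀ ha0, zpow_one]
      field_simp
    rw [← h2]
    have : -(b ^ (-i)) * (b * t) = -(b ^ (-(i-1))) * t := by rw [neg_mul, neg_mul, h1]
    rw [this]; ring
  calc Pfun a b (b * t) = ∑' i : ℤ, a⁻¹ * Pterm a b t (i - 1) := by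
        unfold Pfun; exact tsum_congr hterm
    _ = a⁻¹ * ∑' i : ℤ, Pterm a b t (i - 1) := tsum_mul_left
    _ = a⁻¹ * Pfun a b t := by
        unfold Pfun
        have h := (Equiv.subRight (1:ℤ)).tsum_eq (Pterm a b t)
        simp only [Equiv.subRight_apply] at h
        rw [h]

lemma Pdiv (ha : 1 < a) (hb : 1 < b) (t : ℝ) : Pfun a b (t / b) = a * Pfun a b t := by
  have ha0 : a ≠ 0 := by positivity
  have hb0 : b ≠ 0 := by positivity
  have := Pscale ha hb (t / b)
  rw [mul_div_cancel₀ _ hb0] at this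
  rw [this]; field_simp

lemma Pconvex (ha : 1 < a) (hb : 1 < b) {x y l : ℝ} (hx : 0 < x) (hy : 0 < y)
    (hl0 : 0 ≤ l) (hl1 : l ≤ 1) :
    Pfun a b (l * x + (1 - l) * y) ≤ l * Pfun a b x + (1 - l) * Pfun a b y := by
  have ha0 : (0:ℝ) < a := by linarith
  have hb0 : (0:ℝ) < b := by linarith
  have hz : 0 < l * x + (1 - l) * y := by
    rcases le_or_gt l (1/2) with h | h
    · nlinarith
    · nlinarith
  have hterm : ∀ i : ℤ, Pterm a b (l * x + (1 - l) * y) i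
      ≤ l * Pterm a b x i + (1 - l) * Pterm a b y i := by
    intro i
    unfold Pterm
    have hc : (0:ℝ) < b ^ (-i) := zpow_pos hb0 _
    have hw : (0:ℝ) < a ^ (-i) := zpow_pos ha0 _
    have hexp : Real.exp (-(b ^ (-i)) * (l * x + (1 - l) * y))
        ≤ l * Real.exp (-(b ^ (-i)) * x) + (1 - l) * Real.exp (-(b ^ (-i)) * y) := by
      have := convexOn_exp.2 (Set.mem_univ (-(b ^ (-i)) * x)) (Set.mem_univ (-(b ^ (-i)) * y))
        hl0 (show (0:ℝ) ≤ 1 - l by linarith) (show l + (1 - l) = 1 by ring)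
      simp only [smul_eq_mul] at this
      calc Real.exp (-(b ^ (-i)) * (l * x + (1 - l) * y))
          = Real.exp (l * (-(b ^ (-i)) * x) + (1 - l) * (-(b ^ (-i)) * y)) := by ring_nf
        _ ≤ l * Real.exp (-(b ^ (-i)) * x) + (1 - l) * Real.exp (-(b ^ (-i)) * y) := this
    calc a ^ (-i) * Real.exp (-(b ^ (-i)) * (l * x + (1 - l) * y))
        ≤ a ^ (-i) * (l * Real.exp (-(b ^ (-i)) * x) + (1 - l) * Real.exp (-(b ^ (-i)) * y)) :=
          mul_le_mul_of_nonneg_left hexp hw.le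
      _ = l * (a ^ (-i) * Real.exp (-(b ^ (-i)) * x))
          + (1 - l) * (a ^ (-i) * Real.exp (-(b ^ (-i)) * y)) := by ring
  have hsum2 : Summable (fun i => l * Pterm a b x i + (1 - l) * Pterm a b y i) :=
    ((sumP ha hb hx).mul_left l).add ((sumP ha hb hy).mul_left (1-l))
  calc Pfun a b (l * x + (1 - l) * y)
      ≤ ∑' i : ℤ, (l * Pterm a b x i + (1 - l) * Pterm a b y i) :=
        Summable.tsum_le_tsum hterm (sumP ha hb hz) hsum2
    _ = l * Pfun a b x + (1 - l) * Pfun a b y := by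
        unfold Pfun
        rw [Summable.tsum_add ((sumP ha hb hx).mul_left l) ((sumP ha hb hy).mul_left (1-l)),
          tsum_mul_left, tsum_mul_left]

lemma Pfun_scale_le (ha : 1 < a) (hb : 1 < b) {ε t : ℝ} (hε : 0 < ε)
    (hε2 : ε ≤ (b - 1) / (2 * b)) (ht : 0 < t) :
    Pfun a b ((1 - ε) * t) ≤ (1 + ε * b / (b - 1) * (a - 1)) * Pfun a b t := by
  have hb1 : (0:ℝ) < b - 1 := by linarith
  have hb0 : (0:ℝ) < b := by linarith
  set l := ε * b / (b - 1) with hl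
  have hl0 : 0 ≤ l := by positivity
  have hl1 : l ≤ 1/2 := by
    rw [hl, div_le_iff₀ hb1]
    have := (le_div_iff₀ (by positivity : (0:ℝ) < 2 * b)).1 hε2
    nlinarith
  have key : (1 - ε) * t = l * (t / b) + (1 - l) * t := by
    have h1 : b - 1 ≠ 0 := ne_of_gt hb1
    have h2 : b ≠ 0 := ne_of_gt hb0
    rw [hl]
    field_simp
    ring
  rw [key]
  calc Pfun a b (l * (t / b) + (1 - l) * t)
      ≤ l * Pfun a b (t / b) + (1 - l) * Pfun a b t :=
        Pconvex ha hb (by positivity) ht hl0 (by linarith)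
    _ = (1 + l * (a - 1)) * Pfun a b t := by rw [Pdiv ha hb]; ring

lemma Pfun_le_scale (ha : 1 < a) (hb : 1 < b) {ε t : ℝ} (hε : 0 < ε)
    (hε2 : ε ≤ (b - 1) / (2 * b)) (ht : 0 < t) :
    Pfun a b t ≤ (1 + ε * b / (b - 1) * (a - 1)) * Pfun a b ((1 + ε) * t) := by
  have hb1 : (0:ℝ) < b - 1 := by linarith
  have hb0 : (0:ℝ) < b := by linarith
  have he1 : (0:ℝ) < 1 + ε := by linarith
  set l' := ε * b / ((1 + ε) * (b - 1)) with hl'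
  set l := ε * b / (b - 1) with hl
  have hl'0 : 0 ≤ l' := by positivity
  have hl'l : l' ≤ l := by
    rw [hl', hl]
    apply div_le_div_of_nonneg_left (by positivity) hb1
    nlinarith
  have hl1 : l ≤ 1/2 := by
    rw [hl, div_le_iff₀ hb1]
    have := (le_div_iff₀ (by positivity : (0:ℝ) < 2 * b)).1 hε2
    nlinarith
  have key : t = l' * ((1 + ε) * t / b) + (1 - l') * ((1 + ε) * t) := by
    rw [hl']
    field_simp
    ring
  have step : Pfun a b t ≤ (1 + l' * (a - 1)) * Pfun a b ((1 + ε) * t) := by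
    nth_rewrite 1 [key]
    calc Pfun a b (l' * ((1 + ε) * t / b) + (1 - l') * ((1 + ε) * t))
        ≤ l' * Pfun a b ((1 + ε) * t / b) + (1 - l') * Pfun a b ((1 + ε) * t) :=
          Pconvex ha hb (by positivity) (by positivity) hl'0 (by linarith)
      _ = (1 + l' * (a - 1)) * Pfun a b ((1 + ε) * t) := by rw [Pdiv ha hb]; ring
  have hP : 0 ≤ Pfun a b ((1 + ε) * t) := (Ppos ha hb (by positivity)).le
  calc Pfun a b t ≤ (1 + l' * (a - 1)) * Pfun a b ((1 + ε) * t) := step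
    _ ≤ (1 + l * (a - 1)) * Pfun a b ((1 + ε) * t) := by
        apply mul_le_mul_of_nonneg_right _ hP
        nlinarith

lemma eventually_CexpP (ha : 1 < a) (hb : 1 < b) {m C ε' : ℝ} (hm : 0 < m) (hε' : 0 < ε') :
    ∀ᶠ t in atTop, C * Real.exp (-m * t) ≤ ε' * Pfun a b t := by
  have ha0 : (0:ℝ) < a := by linarith
  have hb0 : (0:ℝ) < b := by linarith
  obtain ⟨j, hj⟩ : ∃ j : ℕ, b⁻¹ ^ j < m / 2 :=
    exists_pow_lt_of_lt_one (by positivity) (by rw [inv_lt_one_iff₀]; right; exact hb)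
  have hc : b ^ (-(j:ℤ)) = b⁻¹ ^ j := by rw [zpow_neg, zpow_natCast, inv_pow]
  have hapos : (0:ℝ) < a ^ (-(j:ℤ)) := zpow_pos ha0 _
  have htend : Tendsto (fun t : ℝ => C * Real.exp (-(m/2) * t)) atTop (nhds 0) := by
    have h1 : Tendsto (fun t : ℝ => (m/2) * t) atTop atTop :=
      Tendsto.const_mul_atTop (half_pos hm) tendsto_id
    have := (Real.tendsto_exp_neg_atTop_nhds_zero.comp h1).const_mul C
    simpa [Function.comp, neg_mul] using this
  filter_upwards [htend.eventually_le_const (mul_pos hε' hapos),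
    eventually_ge_atTop (1:ℝ)] with t h1 ht1
  have ht0 : (0:ℝ) < t := by linarith
  have hble : b ^ (-(j:ℤ)) ≤ m / 2 := by rw [hc]; exact hj.le
  calc C * Real.exp (-m * t)
      = (C * Real.exp (-(m/2) * t)) * Real.exp (-(m/2) * t) := by
        rw [mul_assoc, ← Real.exp_add]; ring_nf
    _ ≤ (ε' * a ^ (-(j:ℤ))) * Real.exp (-(m/2) * t) :=
        mul_le_mul_of_nonneg_right h1 (Real.exp_pos _).le
    _ ≤ (ε' * a ^ (-(j:ℤ))) * Real.exp (-(b ^ (-(j:ℤ))) * t) := by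
        apply mul_le_mul_of_nonneg_left _ (by positivity)
        rw [Real.exp_le_exp]
        nlinarith
    _ = ε' * Pterm a b t (j:ℤ) := by rw [Pterm]; ring
    _ ≤ ε' * Pfun a b t :=
        mul_le_mul_of_nonneg_left (Pterm_le_Pfun ha hb ht0 _) hε'.le

lemma tail_split (ha : 1 < a) (hb : 1 < b) {t' : ℝ} (ht' : 0 < t') (N : ℕ) :
    (∑' k : ℕ, Pterm a b t' ((k:ℤ) + N))
      = Pfun a b t' - ∑' i : ℤ, (if (N:ℤ) ≤ i then 0 else Pterm a b t' i) := by
  have ha0 : (0:ℝ) < a := by linarith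
  set F : ℤ → ℝ := fun i => if (N:ℤ) ≤ i then Pterm a b t' i else 0 with hF
  set G : ℤ → ℝ := fun i => if (N:ℤ) ≤ i then 0 else Pterm a b t' i with hG
  have hFsum : Summable F := by
    apply Summable.of_nonneg_of_le (fun i => ?_) (fun i => ?_) (sumP ha hb ht')
    · rw [hF]; dsimp only; split_ifs
      · exact (Pterm_pos ha0 b t' i).le
      · exact le_refl 0
    · rw [hF]; dsimp only; split_ifs
      · exact le_refl _
      · exact (Pterm_pos ha0 b t' i).le
  have hGsum : Summable G := by
    apply Summable.of_nonneg_of_le (fun i => ?_) (fun i => ?_) (sumP ha hb ht')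
    · rw [hG]; dsimp only; split_ifs
      · exact le_refl 0
      · exact (Pterm_pos ha0 b t' i).le
    · rw [hG]; dsimp only; split_ifs
      · exact (Pterm_pos ha0 b t' i).le
      · exact le_refl _
  have hsplit : Pfun a b t' = (∑' i, F i) + ∑' i, G i := by
    rw [← Summable.tsum_add hFsum hGsum]
    apply tsum_congr
    intro i
    rw [hF, hG]; dsimp only; split_ifs <;> ring
  have hinj : Function.Injective (fun k : ℕ => (k:ℤ) + N) := by
    intro x y h
    simpa using h
  have hsupp : Function.support F ⊆ Set.range (fun k : ℕ => (k:ℤ) + N) := by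
    intro i hi
    have hNi : (N:ℤ) ≤ i := by
      by_contra hcon
      apply hi
      rw [hF]; dsimp only; rw [if_neg hcon]
    refine ⟨(i - N).toNat, ?_⟩
    show ((i - N).toNat : ℤ) + N = i
    omega
  have hFeq : (∑' k : ℕ, Pterm a b t' ((k:ℤ) + N)) = ∑' i, F i := by
    rw [← hinj.tsum_eq hsupp]
    apply tsum_congr
    intro k
    rw [hF]; dsimp only
    rw [if_pos (by omega : (N:ℤ) ≤ (k:ℤ) + N)]
  rw [hFeq, hsplit]; ring

lemma Gbound (ha : 1 < a) (hb : 1 < b) {t' : ℝ} (ht' : 1 ≤ t') (N : ℕ) :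
    (∑' i : ℤ, (if (N:ℤ) ≤ i then 0 else Pterm a b t' i))
      ≤ Pfun a b 1 * Real.exp (-(b ^ (1 - (N:ℤ))) * (t' - 1)) := by
  have ha0 : (0:ℝ) < a := by linarith
  have hb0 : (0:ℝ) < b := by linarith
  have ht0 : (0:ℝ) < t' := by linarith
  set c := Real.exp (-(b ^ (1 - (N:ℤ))) * (t' - 1)) with hc
  have hGsum : Summable (fun i : ℤ => if (N:ℤ) ≤ i then 0 else Pterm a b t' i) := by
    apply Summable.of_nonneg_of_le (fun i => ?_) (fun i => ?_) (sumP ha hb ht0)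
    · split_ifs
      · exact le_refl 0
      · exact (Pterm_pos ha0 b t' i).le
    · split_ifs
      · exact (Pterm_pos ha0 b t' i).le
      · exact le_refl _
  have hterm : ∀ i : ℤ, (if (N:ℤ) ≤ i then 0 else Pterm a b t' i) ≤ Pterm a b 1 i * c := by
    intro i
    have hp1 : 0 < Pterm a b 1 i := Pterm_pos ha0 b 1 i
    split_ifs with h
    · positivity
    · push_neg at h
      have hle : (1:ℤ) - N ≤ -i := by omega
      have hbz : b ^ (1 - (N:ℤ)) ≤ b ^ (-i) := zpow_le_zpow_right₀ hb.le hle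
      unfold Pterm
      have hsplit : Real.exp (-(b ^ (-i)) * t')
          = Real.exp (-(b ^ (-i)) * 1) * Real.exp (-(b ^ (-i)) * (t' - 1)) := by
        rw [← Real.exp_add]; ring_nf
      rw [hsplit, hc]
      have hexple : Real.exp (-(b ^ (-i)) * (t' - 1))
          ≤ Real.exp (-(b ^ (1 - (N:ℤ))) * (t' - 1)) := by
        rw [Real.exp_le_exp]
        nlinarith
      have hw : (0:ℝ) < a ^ (-i) * Real.exp (-(b ^ (-i)) * 1) := by positivity
      calc a ^ (-i) * (Real.exp (-(b ^ (-i)) * 1) * Real.exp (-(b ^ (-i)) * (t' - 1)))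
          = (a ^ (-i) * Real.exp (-(b ^ (-i)) * 1)) * Real.exp (-(b ^ (-i)) * (t' - 1)) := by ring
        _ ≤ (a ^ (-i) * Real.exp (-(b ^ (-i)) * 1)) * Real.exp (-(b ^ (1 - (N:ℤ))) * (t' - 1)) :=
            mul_le_mul_of_nonneg_left hexple hw.le
  calc (∑' i : ℤ, (if (N:ℤ) ≤ i then 0 else Pterm a b t' i))
      ≤ ∑' i : ℤ, Pterm a b 1 i * c :=
        Summable.tsum_le_tsum hterm hGsum ((sumP ha hb one_pos).mul_right c)
    _ = Pfun a b 1 * c := by rw [tsum_mul_right]; rfl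
set_option maxHeartbeats 1000000 in
theorem stmt2 (a b : ℝ) (ha : 1 < a) (hb : 1 < b)
    (A B : ℕ → ℝ) (hA : ∀ n, 0 < A n) (hB : ∀ n, 0 < B n)
    (hAlim : Tendsto (fun n => A n * a ^ n) atTop (nhds 1))
    (hBlim : Tendsto (fun n => B n * b ^ n) atTop (nhds 1)) :
    Tendsto (fun t : ℝ =>
      (∑' n : ℕ, A n * Real.exp (-(B n) * t)) /
      (∑' i : ℤ, a ^ (-i) * Real.exp (-(b ^ (-i)) * t))) atTop (nhds 1) := by
  have ha0 : (0:ℝ) < a := by linarith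
  have hb0 : (0:ℝ) < b := by linarith
  have hb1 : (0:ℝ) < b - 1 := by linarith
  set S : ℝ → ℝ := fun t => ∑' n : ℕ, A n * Real.exp (-(B n) * t) with hSdef
  have hPdef : ∀ t : ℝ, (∑' i : ℤ, a ^ (-i) * Real.exp (-(b ^ (-i)) * t)) = Pfun a b t :=
    fun t => rfl
  -- summability of S
  have hSsum : ∀ {t : ℝ}, 0 ≤ t → Summable (fun n => A n * Real.exp (-(B n) * t)) := by
    intro t ht
    obtain ⟨N₀, hN₀⟩ := (Metric.tendsto_atTop.1 hAlim 1 one_pos)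
    rw [← summable_nat_add_iff N₀]
    apply Summable.of_nonneg_of_le
      (f := fun k : ℕ => 2 * ((a⁻¹) ^ N₀ * (a⁻¹) ^ k)) (fun k => mul_nonneg (hA _).le (Real.exp_pos _).le) ?_ ?_
    · intro k
      have h1 : A (k + N₀) * a ^ (k + N₀) ≤ 2 := by
        have := hN₀ (k + N₀) (Nat.le_add_left _ _)
        rw [Real.dist_eq] at this
        have := abs_lt.1 this
        linarith [this.2]
      have h2 : A (k + N₀) ≤ 2 * (a ^ (k + N₀))⁻¹ := by
        rw [← div_eq_mul_inv, le_div_iff₀ (pow_pos ha0 _)]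
        exact h1
      have h3 : Real.exp (-(B (k + N₀)) * t) ≤ 1 := by
        rw [Real.exp_le_one_iff]
        nlinarith [hB (k + N₀)]
      calc A (k + N₀) * Real.exp (-(B (k + N₀)) * t)
          ≤ (2 * (a ^ (k + N₀))⁻¹) * 1 := by
            apply mul_le_mul h2 h3 (Real.exp_pos _).le (by positivity)
        _ = 2 * ((a⁻¹) ^ N₀ * (a⁻¹) ^ k) := by
            rw [mul_one, ← inv_pow, ← pow_add]; ring_nf
    · apply Summable.mul_left
      apply Summable.mul_left
      exact summable_geometric_of_lt_one (by positivity)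
        (by rw [inv_lt_one_iff₀]; right; exact ha)
  -- upper and lower eventual bounds
  have hup : ∀ δ : ℝ, 0 < δ → ∀ᶠ t in atTop, S t ≤ (1 + δ) * Pfun a b t := by
    intro δ hδ
    set M := b / (b - 1) * (a - 1) with hM
    have hM0 : 0 ≤ M := mul_nonneg (by positivity) (by linarith)
    set K := 2 + 2 * M with hK
    have hK0 : (0:ℝ) < K := by linarith
    set ε := min (δ / K) (min (1/2) ((b - 1) / (2 * b))) with hε
    have hε0 : 0 < ε :=
      lt_min (by positivity) (lt_min (by norm_num) (by positivity))
    have hεhalf : ε ≤ 1/2 := le_trans (min_le_right _ _) (min_le_left _ _)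
    have hεb : ε ≤ (b - 1) / (2 * b) := le_trans (min_le_right _ _) (min_le_right _ _)
    have hεK : ε * K ≤ δ := by
      have h1 : ε ≤ δ / K := min_le_left _ _
      calc ε * K ≤ (δ / K) * K := mul_le_mul_of_nonneg_right h1 hK0.le
        _ = δ := div_mul_cancel₀ _ (ne_of_gt hK0)
    obtain ⟨NA, hNA⟩ := Metric.tendsto_atTop.1 hAlim ε hε0
    obtain ⟨NB, hNB⟩ := Metric.tendsto_atTop.1 hBlim ε hε0
    set N := max NA NB + 1 with hN
    have hNpos : 0 < N := Nat.succ_pos _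
    have hAup : ∀ n, N ≤ n → A n ≤ (1 + ε) * (a ^ n)⁻¹ := by
      intro n hn
      have h := hNA n (by omega)
      rw [Real.dist_eq] at h
      have h2 := (abs_lt.1 h).2
      rw [← div_eq_mul_inv, le_div_iff₀ (pow_pos ha0 _)]
      linarith
    have hBlow : ∀ n, N ≤ n → (1 - ε) * (b ^ n)⁻¹ ≤ B n := by
      intro n hn
      have h := hNB n (by omega)
      rw [Real.dist_eq] at h
      have h2 := (abs_lt.1 h).1
      rw [← div_eq_mul_inv, div_le_iff₀ (pow_pos hb0 _)]
      linarith
    have hne : (Finset.range N).Nonempty := ⟨0, Finset.mem_range.2 hNpos⟩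
    set m := (Finset.range N).inf' hne B with hm
    have hm0 : 0 < m := by
      rw [hm, Finset.lt_inf'_iff]
      exact fun i _ => hB i
    have hheadev : ∀ᶠ t in atTop,
        (∑ n ∈ Finset.range N, A n * Real.exp (-(B n) * t)) ≤ ε * Pfun a b t := by
      filter_upwards [eventually_CexpP ha hb hm0 hε0 (C := ∑ n ∈ Finset.range N, A n),
        eventually_ge_atTop (0:ℝ)] with t h1 ht0
      calc (∑ n ∈ Finset.range N, A n * Real.exp (-(B n) * t))
          ≤ ∑ n ∈ Finset.range N, A n * Real.exp (-m * t) := by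
            apply Finset.sum_le_sum
            intro n hn
            apply mul_le_mul_of_nonneg_left _ (hA n).le
            rw [Real.exp_le_exp]
            have hmle : m ≤ B n := Finset.inf'_le _ hn
            nlinarith [mul_le_mul_of_nonneg_right hmle ht0]
        _ = (∑ n ∈ Finset.range N, A n) * Real.exp (-m * t) := by rw [Finset.sum_mul]
        _ ≤ ε * Pfun a b t := h1
    filter_upwards [hheadev, eventually_ge_atTop (1:ℝ)] with t hhead ht1
    have ht0 : (0:ℝ) < t := by linarith
    have hts : 0 < (1 - ε) * t := mul_pos (by linarith) ht0
    have hinj : Function.Injective (fun k : ℕ => (k:ℤ) + N) := fun x y h => by simpa using h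
    have hsum_tail : Summable (fun k : ℕ => A (k + N) * Real.exp (-(B (k + N)) * t)) :=
      (summable_nat_add_iff N).2 (hSsum ht0.le)
    have hsumP' : Summable (fun k : ℕ => Pterm a b ((1 - ε) * t) ((k:ℤ) + N)) :=
      (sumP ha hb hts).comp_injective hinj
    have htermb : ∀ k : ℕ, A (k + N) * Real.exp (-(B (k + N)) * t)
        ≤ (1 + ε) * Pterm a b ((1 - ε) * t) ((k:ℤ) + N) := by
      intro k
      have hcast : ((k:ℤ) + (N:ℤ)) = (((k + N : ℕ)) : ℤ) := by push_cast; ring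
      have hPterm : Pterm a b ((1 - ε) * t) ((k:ℤ) + N)
          = (a ^ (k + N))⁻¹ * Real.exp (-((b ^ (k + N))⁻¹) * ((1 - ε) * t)) := by
        rw [Pterm, hcast, zpow_neg, zpow_natCast, zpow_neg, zpow_natCast]
      rw [hPterm]
      have h1 : A (k + N) ≤ (1 + ε) * (a ^ (k + N))⁻¹ := hAup _ (Nat.le_add_left _ _)
      have h2 : Real.exp (-(B (k + N)) * t)
          ≤ Real.exp (-((b ^ (k + N))⁻¹) * ((1 - ε) * t)) := by
        rw [Real.exp_le_exp]
        have h3 := hBlow _ (Nat.le_add_left N k)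
        nlinarith [mul_le_mul_of_nonneg_right h3 ht0.le]
      calc A (k + N) * Real.exp (-(B (k + N)) * t)
          ≤ ((1 + ε) * (a ^ (k + N))⁻¹) * Real.exp (-((b ^ (k + N))⁻¹) * ((1 - ε) * t)) :=
            mul_le_mul h1 h2 (Real.exp_pos _).le (by positivity)
        _ = (1 + ε) * ((a ^ (k + N))⁻¹ * Real.exp (-((b ^ (k + N))⁻¹) * ((1 - ε) * t))) := by
            ring
    have htail : (∑' k : ℕ, A (k + N) * Real.exp (-(B (k + N)) * t))
        ≤ (1 + ε) * Pfun a b ((1 - ε) * t) := by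
      calc (∑' k : ℕ, A (k + N) * Real.exp (-(B (k + N)) * t))
          ≤ ∑' k : ℕ, (1 + ε) * Pterm a b ((1 - ε) * t) ((k:ℤ) + N) :=
            Summable.tsum_le_tsum htermb hsum_tail (hsumP'.mul_left _)
        _ = (1 + ε) * ∑' k : ℕ, Pterm a b ((1 - ε) * t) ((k:ℤ) + N) := tsum_mul_left
        _ ≤ (1 + ε) * Pfun a b ((1 - ε) * t) := by
            apply mul_le_mul_of_nonneg_left _ (by linarith)
            exact Summable.tsum_le_tsum_of_inj _ hinj
              (fun c _ => (Pterm_pos ha0 b _ c).le) (fun k => le_refl _) hsumP'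
              (sumP ha hb hts)
    have hscale := Pfun_scale_le ha hb hε0 hεb ht0
    have hP0 : 0 ≤ Pfun a b t := (Ppos ha hb ht0).le
    have hscalar : ε + (1 + ε) * (1 + ε * b / (b - 1) * (a - 1)) ≤ 1 + δ := by
      have hMe : ε * b / (b - 1) * (a - 1) = ε * M := by rw [hM]; ring
      rw [hMe]
      nlinarith [mul_nonneg hε0.le hM0,
        mul_le_mul_of_nonneg_right hεhalf (mul_nonneg hε0.le hM0)]
    have hsplit : S t = (∑ n ∈ Finset.range N, A n * Real.exp (-(B n) * t))
        + ∑' k : ℕ, A (k + N) * Real.exp (-(B (k + N)) * t) := by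
      rw [hSdef]
      exact (Summable.sum_add_tsum_nat_add N (hSsum ht0.le)).symm
    calc S t = (∑ n ∈ Finset.range N, A n * Real.exp (-(B n) * t))
          + ∑' k : ℕ, A (k + N) * Real.exp (-(B (k + N)) * t) := hsplit
      _ ≤ ε * Pfun a b t + (1 + ε) * ((1 + ε * b / (b - 1) * (a - 1)) * Pfun a b t) := by
          apply add_le_add hhead
          calc (∑' k : ℕ, A (k + N) * Real.exp (-(B (k + N)) * t))
              ≤ (1 + ε) * Pfun a b ((1 - ε) * t) := htail
            _ ≤ (1 + ε) * ((1 + ε * b / (b - 1) * (a - 1)) * Pfun a b t) :=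
              mul_le_mul_of_nonneg_left hscale (by linarith)
      _ ≤ (1 + δ) * Pfun a b t := by
          nlinarith [mul_le_mul_of_nonneg_right hscalar hP0]

  have hlow : ∀ δ : ℝ, 0 < δ → ∀ᶠ t in atTop, (1 - δ) * Pfun a b t ≤ S t := by
    intro δ hδ
    set M := b / (b - 1) * (a - 1) with hM
    have hM0 : 0 ≤ M := mul_nonneg (by positivity) (by linarith)
    set K := 2 + 2 * M with hK
    have hK0 : (0:ℝ) < K := by linarith
    set ε := min (δ / K) (min (1/2) ((b - 1) / (2 * b))) with hε
    have hε0 : 0 < ε :=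
      lt_min (by positivity) (lt_min (by norm_num) (by positivity))
    have hεhalf : ε ≤ 1/2 := le_trans (min_le_right _ _) (min_le_left _ _)
    have hεb : ε ≤ (b - 1) / (2 * b) := le_trans (min_le_right _ _) (min_le_right _ _)
    have hεK : ε * K ≤ δ := by
      have h1 : ε ≤ δ / K := min_le_left _ _
      calc ε * K ≤ (δ / K) * K := mul_le_mul_of_nonneg_right h1 hK0.le
        _ = δ := div_mul_cancel₀ _ (ne_of_gt hK0)
    obtain ⟨NA, hNA⟩ := Metric.tendsto_atTop.1 hAlim ε hε0
    obtain ⟨NB, hNB⟩ := Metric.tendsto_atTop.1 hBlim ε hε0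
    set N := max NA NB + 1 with hN
    have hAlow : ∀ n, N ≤ n → (1 - ε) * (a ^ n)⁻¹ ≤ A n := by
      intro n hn
      have h := hNA n (by omega)
      rw [Real.dist_eq] at h
      have h2 := (abs_lt.1 h).1
      rw [← div_eq_mul_inv, div_le_iff₀ (pow_pos ha0 _)]
      linarith
    have hBup : ∀ n, N ≤ n → B n ≤ (1 + ε) * (b ^ n)⁻¹ := by
      intro n hn
      have h := hNB n (by omega)
      rw [Real.dist_eq] at h
      have h2 := (abs_lt.1 h).2
      rw [← div_eq_mul_inv, le_div_iff₀ (pow_pos hb0 _)]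
      linarith
    have hc0 : (0:ℝ) < b ^ (1 - (N:ℤ)) := zpow_pos hb0 _
    have hGev := eventually_CexpP ha hb hc0 hε0
      (C := Pfun a b 1 * Real.exp (b ^ (1 - (N:ℤ))))
    filter_upwards [hGev, eventually_ge_atTop (1:ℝ)] with t hGt ht1
    have ht0 : (0:ℝ) < t := by linarith
    have hts : 0 < (1 + ε) * t := by positivity
    have hts1 : 1 ≤ (1 + ε) * t := by nlinarith
    have hinj : Function.Injective (fun k : ℕ => (k:ℤ) + N) := fun x y h => by simpa using h
    have hP0 : 0 ≤ Pfun a b t := (Ppos ha hb ht0).le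
    set G := ∑' i : ℤ, (if (N:ℤ) ≤ i then 0 else Pterm a b ((1 + ε) * t) i) with hGdef
    have hGle : G ≤ ε * Pfun a b t := by
      calc G ≤ Pfun a b 1 * Real.exp (-(b ^ (1 - (N:ℤ))) * ((1 + ε) * t - 1)) :=
            Gbound ha hb hts1 N
        _ ≤ Pfun a b 1 * (Real.exp (b ^ (1 - (N:ℤ))) * Real.exp (-(b ^ (1 - (N:ℤ))) * t)) := by
            apply mul_le_mul_of_nonneg_left _ (Ppos ha hb one_pos).le
            rw [← Real.exp_add, Real.exp_le_exp]
            nlinarith [mul_nonneg (mul_nonneg hc0.le hε0.le) ht0.le]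
        _ = (Pfun a b 1 * Real.exp (b ^ (1 - (N:ℤ)))) * Real.exp (-(b ^ (1 - (N:ℤ))) * t) := by
            ring
        _ ≤ ε * Pfun a b t := hGt
    have hsumP' : Summable (fun k : ℕ => Pterm a b ((1 + ε) * t) ((k:ℤ) + N)) :=
      (sumP ha hb hts).comp_injective hinj
    have hsum_tail : Summable (fun k : ℕ => A (k + N) * Real.exp (-(B (k + N)) * t)) :=
      (summable_nat_add_iff N).2 (hSsum ht0.le)
    have htermb : ∀ k : ℕ, (1 - ε) * Pterm a b ((1 + ε) * t) ((k:ℤ) + N)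
        ≤ A (k + N) * Real.exp (-(B (k + N)) * t) := by
      intro k
      have hcast : ((k:ℤ) + (N:ℤ)) = (((k + N : ℕ)) : ℤ) := by push_cast; ring
      have hPterm : Pterm a b ((1 + ε) * t) ((k:ℤ) + N)
          = (a ^ (k + N))⁻¹ * Real.exp (-((b ^ (k + N))⁻¹) * ((1 + ε) * t)) := by
        rw [Pterm, hcast, zpow_neg, zpow_natCast, zpow_neg, zpow_natCast]
      rw [hPterm]
      have h1 : (1 - ε) * (a ^ (k + N))⁻¹ ≤ A (k + N) := hAlow _ (Nat.le_add_left _ _)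
      have h2 : Real.exp (-((b ^ (k + N))⁻¹) * ((1 + ε) * t))
          ≤ Real.exp (-(B (k + N)) * t) := by
        rw [Real.exp_le_exp]
        have h3 := hBup _ (Nat.le_add_left N k)
        nlinarith [mul_le_mul_of_nonneg_right h3 ht0.le]
      calc (1 - ε) * ((a ^ (k + N))⁻¹ * Real.exp (-((b ^ (k + N))⁻¹) * ((1 + ε) * t)))
          = ((1 - ε) * (a ^ (k + N))⁻¹) * Real.exp (-((b ^ (k + N))⁻¹) * ((1 + ε) * t)) := by
            ring
        _ ≤ A (k + N) * Real.exp (-(B (k + N)) * t) :=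
            mul_le_mul h1 h2 (Real.exp_pos _).le (hA _).le
    have htail_ge : (1 - ε) * (Pfun a b ((1 + ε) * t) - G)
        ≤ ∑' k : ℕ, A (k + N) * Real.exp (-(B (k + N)) * t) := by
      have hts_eq := tail_split ha hb hts N
      calc (1 - ε) * (Pfun a b ((1 + ε) * t) - G)
          = ∑' k : ℕ, (1 - ε) * Pterm a b ((1 + ε) * t) ((k:ℤ) + N) := by
            rw [tsum_mul_left, hts_eq, hGdef]
        _ ≤ ∑' k : ℕ, A (k + N) * Real.exp (-(B (k + N)) * t) :=
            Summable.tsum_le_tsum htermb (hsumP'.mul_left _) hsum_tail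
    have hhead0 : 0 ≤ ∑ n ∈ Finset.range N, A n * Real.exp (-(B n) * t) :=
      Finset.sum_nonneg fun n _ => mul_nonneg (hA n).le (Real.exp_pos _).le
    have hStail : (∑' k : ℕ, A (k + N) * Real.exp (-(B (k + N)) * t)) ≤ S t := by
      have hsplit : S t = (∑ n ∈ Finset.range N, A n * Real.exp (-(B n) * t))
          + ∑' k : ℕ, A (k + N) * Real.exp (-(B (k + N)) * t) := by
        rw [hSdef]
        exact (Summable.sum_add_tsum_nat_add N (hSsum ht0.le)).symm
      rw [hsplit]
      exact le_add_of_nonneg_left hhead0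
    have hPP := Pfun_le_scale ha hb hε0 hεb ht0
    have hκ0 : 0 ≤ ε * b / (b - 1) * (a - 1) :=
      mul_nonneg (by positivity) (by linarith)
    have hP2 : 0 ≤ Pfun a b ((1 + ε) * t) := (Ppos ha hb hts).le
    have hPge : (1 - ε * b / (b - 1) * (a - 1)) * Pfun a b t ≤ Pfun a b ((1 + ε) * t) := by
      rcases le_or_gt (ε * b / (b - 1) * (a - 1)) 1 with h | h
      · nlinarith [mul_le_mul_of_nonneg_left hPP (by linarith : 0 ≤ 1 - ε * b / (b - 1) * (a - 1)),
          mul_nonneg (mul_nonneg hκ0 hκ0) hP2]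
      · nlinarith [hP0]
    have hκM : ε * b / (b - 1) * (a - 1) = ε * M := by rw [hM]; field_simp
    have hscalar2 : (1 - δ) ≤ (1 - ε) * ((1 - ε * b / (b - 1) * (a - 1)) - ε) := by
      rw [hκM]
      nlinarith [mul_nonneg (mul_nonneg hε0.le hε0.le) hM0, sq_nonneg ε,
        mul_nonneg hε0.le hM0]
    calc (1 - δ) * Pfun a b t
        ≤ ((1 - ε) * ((1 - ε * b / (b - 1) * (a - 1)) - ε)) * Pfun a b t :=
          mul_le_mul_of_nonneg_right hscalar2 hP0
      _ = (1 - ε) * ((1 - ε * b / (b - 1) * (a - 1)) * Pfun a b t - ε * Pfun a b t) := by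
          ring
      _ ≤ (1 - ε) * (Pfun a b ((1 + ε) * t) - G) := by
          apply mul_le_mul_of_nonneg_left _ (by linarith : (0:ℝ) ≤ 1 - ε)
          linarith
      _ ≤ ∑' k : ℕ, A (k + N) * Real.exp (-(B (k + N)) * t) := htail_ge
      _ ≤ S t := hStail

  -- conclude
  simp only [hPdef]
  rw [Metric.tendsto_nhds]
  intro η hη
  filter_upwards [hup (η/2) (by positivity), hlow (η/2) (by positivity),
    eventually_gt_atTop (0:ℝ)] with t hu hl ht0
  have hP : 0 < Pfun a b t := Ppos ha hb ht0
  have h3 : S t / Pfun a b t ≤ 1 + η/2 := by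
    rw [div_le_iff₀ hP]; linarith [hu]
  have h4 : 1 - η/2 ≤ S t / Pfun a b t := by
    rw [le_div_iff₀ hP]; linarith [hl]
  rw [Real.dist_eq, abs_lt]
  constructor <;> [linarith; linarith]
end

section
/- Let a > 1, b > 1 and β = (log a)/(log b). Then ∑_{i=-∞}^{∞} a^{-i} exp(-b^{-i} t) = (1/log b) · t^{-β} · ∑_{m=-∞}^{∞} t^{2πi m/log b} · Γ(β - 2πi m/(log b)) for all t > 0, where Γ is the complex Gamma function and the right-hand series converges absolutely. -/
/-!
With `p = log a` and `c = log b`, the `i`-th summand is `f i` for the kernel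
`f x = exp (-p x - t e^{-c x})`, so Poisson summation turns the sum into `∑ 𝓕 f m`.
The substitution `v = e^{-c x}` identifies `𝓕 f ξ` with the Mellin transform of `e^{-t v}`,
that is `c⁻¹ t^{-s} Γ(s)` at `s = (p + 2πiξ) / c`. Finally `Γ(z + 2) = z (z + 1) Γ(z)`
and `‖Γ(z)‖ ≤ Γ(Re z)` give `Γ(β + iy) = O(y⁻²)`, which makes the Fourier side absolutely
summable.
-/

open MeasureTheory Set Filter Asymptotics Complex
open scoped FourierTransform Real

namespace Complex

lemma norm_Gamma_le_Gamma_re {z : ℂ} (hz : 0 < z.re) : ‖Gamma z‖ ≤ Real.Gamma z.re := by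
  rw [Gamma_eq_integral hz, GammaIntegral, Real.Gamma_eq_integral hz]
  refine (norm_integral_le_integral_norm _).trans_eq
    (setIntegral_congr_fun measurableSet_Ioi fun x hx => ?_)
  simp [norm_cpow_eq_rpow_re_of_pos (mem_Ioi.mp hx), norm_exp]

lemma norm_Gamma_mul_im_sq_le {z : ℂ} (hz : 0 < z.re) :
    ‖Gamma z‖ * z.im ^ 2 ≤ Real.Gamma (z.re + 2) := by
  have hz0 : z ≠ 0 := fun h => by simp [h] at hz
  have hz1 : z + 1 ≠ 0 := fun h => by
    have := congrArg re h
    simp only [add_re, one_re, zero_re] at this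
    linarith
  have hrec : Gamma (z + 2) = z * (z + 1) * Gamma z := by
    rw [show z + 2 = z + 1 + 1 by ring, Gamma_add_one _ hz1, Gamma_add_one _ hz0]; ring
  have him : z.im ^ 2 ≤ ‖z‖ * ‖z + 1‖ := by
    rw [sq, ← abs_mul_abs_self]
    exact mul_le_mul (abs_im_le_norm z) (by simpa using abs_im_le_norm (z + 1)) (abs_nonneg _)
      (norm_nonneg _)
  calc ‖Gamma z‖ * z.im ^ 2 ≤ ‖Gamma z‖ * (‖z‖ * ‖z + 1‖) := by gcongr
    _ = ‖Gamma (z + 2)‖ := by rw [hrec, norm_mul, norm_mul]; ring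
    _ ≤ Real.Gamma (z.re + 2) := by
      simpa using norm_Gamma_le_Gamma_re (z := z + 2) (by simp only [add_re, re_ofNat]; linarith)

lemma summable_norm_Gamma_add_mul_I {β k : ℝ} (hβ : 0 < β) (hk : k ≠ 0) :
    Summable fun m : ℤ => ‖Gamma (β + k * m * I)‖ := by
  refine .of_norm_bounded_eventually
    ((Real.summable_one_div_int_pow.mpr one_lt_two).mul_left (Real.Gamma (β + 2) / k ^ 2)) ?_
  filter_upwards [eventually_cofinite_ne 0] with m hm
  have hbound := norm_Gamma_mul_im_sq_le (z := β + k * m * I) (by simpa)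
  simp only [add_re, ofReal_re, mul_re, ofReal_im, intCast_re, intCast_im, I_re, I_im, add_im,
    mul_im] at hbound
  rw [norm_norm, ← mul_div_assoc, mul_one, div_div, ← mul_pow,
    le_div_iff₀ (by positivity)]
  simpa using hbound

lemma summable_norm_ofReal_cpow_mul_I_mul_Gamma_sub {t β k : ℝ} (ht : 0 < t) (hβ : 0 < β)
    (hk : k ≠ 0) :
    Summable fun m : ℤ => ‖(t : ℂ) ^ (k * m * I) * Gamma (β - k * m * I)‖ := by
  refine (summable_norm_Gamma_add_mul_I hβ (neg_ne_zero.mpr hk)).congr fun m => ?_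
  rw [norm_mul, norm_cpow_eq_rpow_re_of_pos ht]
  simp [sub_eq_add_neg]

end Complex

lemma Real.fourier_comp_mul_left {E : Type*} [NormedAddCommGroup E] [NormedSpace ℂ E]
    (f : ℝ → E) {c : ℝ} (hc : c ≠ 0) (ξ : ℝ) :
    𝓕 (fun x => f (c * x)) ξ = |c⁻¹| • 𝓕 f (ξ / c) := by
  simp only [Real.fourier_real_eq]
  rw [← Measure.integral_comp_mul_left]
  congr 1 with x
  congr 3
  field_simp

-- `gumbelKernel 1 1 1` is the standard Gumbel density.
noncomputable def gumbelKernel (p c t x : ℝ) : ℝ :=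
  Real.exp (-(p * x) - t * Real.exp (-(c * x)))

section gumbelKernel

variable {p c t : ℝ}

lemma continuous_gumbelKernel : Continuous (gumbelKernel p c t) := by
  unfold gumbelKernel; fun_prop

lemma gumbelKernel_isBigO_rpow_atTop (hp : 0 < p) (ht : 0 ≤ t) (s : ℝ) :
    gumbelKernel p c t =O[atTop] (· ^ s) := by
  refine IsBigO.trans (isBigO_of_le _ fun x => ?_) (isLittleO_exp_neg_mul_rpow_atTop hp s).isBigO
  simp only [gumbelKernel, Real.norm_eq_abs, Real.abs_exp, neg_mul]
  gcongr
  have := Real.exp_pos (-(c * x))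
  nlinarith

lemma gumbelKernel_neg_isBigO_rpow_atTop (hc : 0 < c) (ht : 0 < t) (s : ℝ) :
    (fun y => gumbelKernel p c t (-y)) =O[atTop] (· ^ s) := by
  -- `e^{c y} ≥ (c y)² / 2` puts a Gaussian above the kernel at `-y`.
  have hquad : -(t * c ^ 2 / 2) < 0 := by nlinarith [mul_pos ht (pow_pos hc 2)]
  refine IsBigO.trans (.of_bound' ?_)
    (rexp_neg_quadratic_isLittleO_rpow_atTop hquad p s).isBigO
  filter_upwards [eventually_ge_atTop 0] with y hy
  simp only [gumbelKernel, Real.norm_eq_abs, Real.abs_exp, mul_neg, neg_neg]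
  gcongr
  have := Real.pow_div_factorial_le_exp _ (mul_nonneg hc.le hy) 2
  simp only [Nat.factorial_two, Nat.cast_ofNat] at this
  nlinarith [mul_le_mul_of_nonneg_left this ht.le]

lemma gumbelKernel_isBigO_abs_rpow_cocompact (hp : 0 < p) (hc : 0 < c) (ht : 0 < t) (s : ℝ) :
    gumbelKernel p c t =O[cocompact ℝ] (|·| ^ s) := by
  rw [cocompact_eq_atBot_atTop, isBigO_sup]
  constructor
  · refine ((gumbelKernel_neg_isBigO_rpow_atTop (p := p) hc ht s).comp_tendsto
      tendsto_neg_atBot_atTop).congr' (.of_forall fun x => by simp) ?_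
    filter_upwards [eventually_lt_atBot 0] with x hx
    simp [abs_of_neg hx]
  · refine (gumbelKernel_isBigO_rpow_atTop hp ht.le s).congr' .rfl ?_
    filter_upwards [eventually_ge_atTop 0] with x hx
    simp [abs_of_nonneg hx]

lemma fourier_gumbelKernel_one (hp : 0 < p) (ht : 0 < t) (η : ℝ) :
    𝓕 (fun u => (gumbelKernel p 1 t u : ℂ)) η =
      (t : ℂ) ^ (-(p + 2 * π * η * I)) * Gamma (p + 2 * π * η * I) := by
  set s : ℂ := p + 2 * π * η * I
  have hs : s.re = p ∧ s.im = 2 * π * η := by simp [s]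
  have hmellin : mellin (fun v : ℝ => (Real.exp (-(t * v)) : ℂ)) s = t ^ (-s) * Gamma s := by
    rw [mellin_comp_mul_left (fun v => (Real.exp (-v) : ℂ)) s ht, ← GammaIntegral_eq_mellin,
      ← Gamma_eq_integral (hs.1 ▸ hp), smul_eq_mul]
  have hkernel : (fun u => (gumbelKernel p 1 t u : ℂ)) =
      fun u => Real.exp (-p * u) • (Real.exp (-(t * Real.exp (-u))) : ℂ) := by
    ext u
    rw [gumbelKernel, one_mul, sub_eq_add_neg, Real.exp_add, Complex.real_smul]
    push_cast
    ring_nf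
  rw [← hmellin, mellin_eq_fourier, hs.1, hs.2, mul_div_cancel_left₀ _ (by positivity),
    hkernel]

lemma fourier_gumbelKernel (hp : 0 < p) (hc : 0 < c) (ht : 0 < t) (ξ : ℝ) :
    𝓕 (fun x => (gumbelKernel p c t x : ℂ)) ξ =
      c⁻¹ * ((t : ℂ) ^ (-((p / c : ℝ) + 2 * π * (ξ / c : ℝ) * I)) *
        Gamma ((p / c : ℝ) + 2 * π * (ξ / c : ℝ) * I)) := by
  have hscale : ∀ x, gumbelKernel p c t x = gumbelKernel (p / c) 1 t (c * x) := fun x => by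
    simp only [gumbelKernel, one_mul]
    field_simp
  simp_rw [hscale]
  rw [Real.fourier_comp_mul_left (fun u => (gumbelKernel (p / c) 1 t u : ℂ)) hc.ne',
    fourier_gumbelKernel_one (div_pos hp hc) ht, abs_inv, abs_of_pos hc, Complex.real_smul]

lemma fourier_gumbelKernel_neg (hp : 0 < p) (hc : 0 < c) (ht : 0 < t) (ξ : ℝ) :
    𝓕 (fun x => (gumbelKernel p c t x : ℂ)) (-ξ) =
      1 / (c : ℂ) * (t : ℂ) ^ (-((p / c : ℝ) : ℂ)) *
        ((t : ℂ) ^ (2 * π * I * ξ / c) * Gamma ((p / c : ℝ) - 2 * π * I * ξ / c)) := by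
  have hs : ((p / c : ℝ) : ℂ) + 2 * π * (-ξ / c : ℝ) * I =
      (p / c : ℝ) - 2 * π * I * ξ / c := by
    push_cast
    ring
  rw [fourier_gumbelKernel hp hc ht, hs, neg_sub', sub_eq_add_neg, neg_neg,
    cpow_add _ _ (ofReal_ne_zero.mpr ht.ne'), ofReal_inv]
  ring

lemma summable_fourier_gumbelKernel (hp : 0 < p) (hc : 0 < c) (ht : 0 < t) :
    Summable fun m : ℤ => 𝓕 (fun x => (gumbelKernel p c t x : ℂ)) m := by
  refine .of_norm (((summable_norm_Gamma_add_mul_I (div_pos hp hc)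
    (div_ne_zero Real.two_pi_pos.ne' hc.ne')).mul_left (c⁻¹ * t ^ (-(p / c)))).congr fun m => ?_)
  have harg : ((2 * π / c : ℝ) : ℂ) * m * I = 2 * π * ((m / c : ℝ) : ℂ) * I := by
    push_cast
    ring
  have hre : (-((p / c : ℝ) + 2 * π * (m / c : ℝ) * I) : ℂ).re = -(p / c) := by simp
  rw [fourier_gumbelKernel hp hc ht, norm_mul, norm_mul, norm_cpow_eq_rpow_re_of_pos ht, hre,
    harg, norm_real, Real.norm_of_nonneg (inv_nonneg.mpr hc.le)]
  ring

lemma tsum_gumbelKernel_eq_tsum_fourier (hp : 0 < p) (hc : 0 < c) (ht : 0 < t) :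
    ∑' i : ℤ, (gumbelKernel p c t i : ℂ) =
      ∑' m : ℤ, 𝓕 (fun x => (gumbelKernel p c t x : ℂ)) m := by
  simpa using Real.tsum_eq_tsum_fourier_of_rpow_decay_of_summable
    (f := fun x => (gumbelKernel p c t x : ℂ)) (continuous_ofReal.comp continuous_gumbelKernel)
    one_lt_two (isBigO_ofReal_left.mpr (gumbelKernel_isBigO_abs_rpow_cocompact hp hc ht _))
    (summable_fourier_gumbelKernel hp hc ht) 0

lemma gumbelKernel_log_intCast {a b : ℝ} (ha : 0 < a) (hb : 0 < b) (t : ℝ) (i : ℤ) :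
    gumbelKernel (Real.log a) (Real.log b) t i = a ^ (-i) * Real.exp (-(b ^ (-i)) * t) := by
  simp only [gumbelKernel, ← Real.rpow_intCast, Real.rpow_def_of_pos ha, Real.rpow_def_of_pos hb,
    sub_eq_add_neg, Real.exp_add]
  push_cast
  ring_nf

end gumbelKernel

theorem stmt3 (a b : ℝ) (ha : 1 < a) (hb : 1 < b) (t : ℝ) (ht : 0 < t) :
    Summable (fun m : ℤ => ‖(t : ℂ) ^ ((2 * Real.pi * Complex.I * m) / (Real.log b : ℂ)) *
        Complex.Gamma (((Real.log a / Real.log b : ℝ) : ℂ) -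
          2 * Real.pi * Complex.I * m / (Real.log b : ℂ))‖) ∧
    ((∑' i : ℤ, a ^ (-i) * Real.exp (-(b ^ (-i)) * t) : ℝ) : ℂ) =
      (1 / (Real.log b : ℂ)) * (t : ℂ) ^ (-((Real.log a / Real.log b : ℝ) : ℂ)) *
        ∑' m : ℤ, (t : ℂ) ^ ((2 * Real.pi * Complex.I * m) / (Real.log b : ℂ)) *
          Complex.Gamma (((Real.log a / Real.log b : ℝ) : ℂ) -
            2 * Real.pi * Complex.I * m / (Real.log b : ℂ)) := by
  have hla : 0 < Real.log a := Real.log_pos ha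
  have hc : 0 < Real.log b := Real.log_pos hb
  refine ⟨(summable_norm_ofReal_cpow_mul_I_mul_Gamma_sub ht (div_pos hla hc)
    (div_ne_zero Real.two_pi_pos.ne' hc.ne')).congr fun m => ?_, ?_⟩
  · rw [show (2 * π * I * m / Real.log b : ℂ) = ((2 * π / Real.log b : ℝ) : ℂ) * m * I by
      push_cast; ring]
  calc ((∑' i : ℤ, a ^ (-i) * Real.exp (-(b ^ (-i)) * t) : ℝ) : ℂ)
      = ∑' i : ℤ, (gumbelKernel (Real.log a) (Real.log b) t i : ℂ) := by
        rw [ofReal_tsum]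
        simp only [gumbelKernel_log_intCast (zero_lt_one.trans ha) (zero_lt_one.trans hb)]
    _ = ∑' m : ℤ,
          𝓕 (fun x => (gumbelKernel (Real.log a) (Real.log b) t x : ℂ)) (-m : ℤ) := by
        rw [tsum_gumbelKernel_eq_tsum_fourier hla hc ht]
        exact (tsum_comp_neg _).symm
    _ = _ := by
        simp_rw [Int.cast_neg, fourier_gumbelKernel_neg hla hc ht, ofReal_intCast]
        exact tsum_mul_left
end

section
/- Let U be a countable ultrametric space, x₀ ∈ U, B_i the ball of radius d_i around x₀ with N_i = |B_i| points (N_0 = 1), and suppose ∑ 1/N_i < ∞. Let J_i denote the indicator function of B_i. Define φ_i = (N_{i-1}(1 - N_{i-1}/N_i))^{-1/2} (J_{i-1} - (N_{i-1}/N_i) J_i) for i ≥ 1. Then the functions φ_i form an orthonormal system in ℓ²(U): ∑_{x∈U} φ_i(x) φ_j(x) = δ_{ij}. -/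
private lemma sum_ind {U : Type*} [DecidableEq U] (A C T : Finset U) (hA : A ⊆ T) :
    (∑ x ∈ T, (if x ∈ A then (1:ℝ) else 0) * (if x ∈ C then (1:ℝ) else 0))
      = ((A ∩ C).card : ℝ) := by
  have h : ∀ x, (if x ∈ A then (1:ℝ) else 0) * (if x ∈ C then (1:ℝ) else 0)
      = if x ∈ A ∩ C then (1:ℝ) else 0 := by
    intro x
    by_cases hx : x ∈ A <;> by_cases hy : x ∈ C <;> simp [hx, hy]
  simp_rw [h]
  rw [Finset.sum_ite_mem, Finset.inter_comm T, Finset.inter_eq_left.mpr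
    (fun x hx => hA (Finset.mem_inter.mp hx).1)]
  simp

theorem stmt6 {U : Type*} [DecidableEq U] [Countable U]
    (B : ℕ → Finset U) (hmono : ∀ i, B i ⊆ B (i + 1))
    (x₀ : U) (hB0 : B 0 = {x₀})
    (N : ℕ → ℕ) (hN : ∀ i, N i = (B i).card) (hNs : StrictMono N)
    (hsum : Summable (fun i => (1 : ℝ) / N i))
    (φ : ℕ → U → ℝ)
    (hφ : ∀ i x, φ (i + 1) x =
      ((N i : ℝ) * (1 - (N i : ℝ) / N (i + 1))) ^ (-(1/2) : ℝ) *
        ((if x ∈ B i then (1:ℝ) else 0) -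
          ((N i : ℝ) / N (i + 1)) * (if x ∈ B (i + 1) then (1:ℝ) else 0))) :
    ∀ i j : ℕ, 1 ≤ i → 1 ≤ j →
      (∑' x : U, φ i x * φ j x) = if i = j then 1 else 0 := by
  have hBmono : ∀ ⦃p q : ℕ⦄, p ≤ q → B p ⊆ B q := by
    intro p q h
    exact monotone_nat_of_le_succ (f := B) (fun n => Finset.le_iff_subset.mpr (hmono n)) h
  have hN1 : ∀ k, 1 ≤ N k := by
    intro k
    have := hNs.monotone (Nat.zero_le k)
    rw [hN 0, hB0] at this
    simpa using this
  have hNpos : ∀ k, (0:ℝ) < N k := fun k => by exact_mod_cast hN1 k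
  have hNlt : ∀ k, (N k : ℝ) < N (k+1) := fun k => by exact_mod_cast hNs (Nat.lt_succ_self k)
  have hc : ∀ k, (0:ℝ) < (N k : ℝ) * (1 - (N k : ℝ) / N (k+1)) := by
    intro k
    have : (N k : ℝ) / N (k+1) < 1 := (div_lt_one (hNpos (k+1))).mpr (hNlt k)
    have h2 : (0:ℝ) < 1 - (N k : ℝ) / N (k+1) := by linarith
    exact mul_pos (hNpos k) h2
  -- a p squared
  have ha : ∀ k, ((N k : ℝ) * (1 - (N k : ℝ) / N (k+1))) ^ (-(1/2) : ℝ)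
      * ((N k : ℝ) * (1 - (N k : ℝ) / N (k+1))) ^ (-(1/2) : ℝ)
      = ((N k : ℝ) * (1 - (N k : ℝ) / N (k+1)))⁻¹ := by
    intro k
    rw [← Real.rpow_add (hc k), show (-(1/2:ℝ)) + (-(1/2)) = -1 by norm_num,
      Real.rpow_neg_one]
  have hφ0 : ∀ k x, x ∉ B (k+1) → φ (k+1) x = 0 := by
    intro k x hx
    have hx' : x ∉ B k := fun h => hx (hmono k h)
    rw [hφ]
    simp [hx, hx']
  have key : ∀ p q : ℕ, p ≤ q →
      (∑' x : U, φ (p+1) x * φ (q+1) x) = if p = q then 1 else 0 := by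
    intro p q hpq
    have hsupp : ∀ x ∉ B (q+1), φ (p+1) x * φ (q+1) x = 0 := by
      intro x hx
      rw [hφ0 q x hx, mul_zero]
    rw [tsum_eq_sum hsupp]
    set a := ((N p : ℝ) * (1 - (N p : ℝ) / N (p+1))) ^ (-(1/2) : ℝ) with ha_def
    set b := ((N q : ℝ) * (1 - (N q : ℝ) / N (q+1))) ^ (-(1/2) : ℝ) with hb_def
    set r := (N p : ℝ) / N (p+1) with hr_def
    set s := (N q : ℝ) / N (q+1) with hs_def
    have expand : ∀ x, φ (p+1) x * φ (q+1) x =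
        a*b*((if x ∈ B p then (1:ℝ) else 0) * (if x ∈ B q then (1:ℝ) else 0))
        - a*b*s*((if x ∈ B p then (1:ℝ) else 0) * (if x ∈ B (q+1) then (1:ℝ) else 0))
        - a*b*r*((if x ∈ B (p+1) then (1:ℝ) else 0) * (if x ∈ B q then (1:ℝ) else 0))
        + a*b*(r*s)*((if x ∈ B (p+1) then (1:ℝ) else 0) * (if x ∈ B (q+1) then (1:ℝ) else 0)) := by
      intro x
      rw [hφ, hφ, ← ha_def, ← hb_def, ← hr_def, ← hs_def]
      ring
    rw [Finset.sum_congr rfl (fun x _ => expand x)]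
    rw [Finset.sum_add_distrib, Finset.sum_sub_distrib, Finset.sum_sub_distrib,
      ← Finset.mul_sum, ← Finset.mul_sum, ← Finset.mul_sum, ← Finset.mul_sum]
    have hpq1 : B p ⊆ B (q+1) := hBmono (Nat.le_succ_of_le hpq)
    have hp1q1 : B (p+1) ⊆ B (q+1) := hBmono (Nat.succ_le_succ hpq)
    rw [sum_ind (B p) (B q) _ hpq1, sum_ind (B p) (B (q+1)) _ hpq1,
      sum_ind (B (p+1)) (B q) _ hp1q1, sum_ind (B (p+1)) (B (q+1)) _ hp1q1]
    rw [Finset.inter_eq_left.mpr (hBmono hpq),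
      Finset.inter_eq_left.mpr hpq1, Finset.inter_eq_left.mpr hp1q1]
    rcases eq_or_lt_of_le hpq with rfl | hlt
    · rw [Finset.inter_eq_right.mpr (hmono p)]
      rw [if_pos rfl, ← hN p, ← hN (p+1)]
      have hab : a * b = ((N p : ℝ) * (1 - (N p : ℝ) / N (p+1)))⁻¹ := ha p
      rw [← hr_def] at hs_def
      rw [hs_def, hab, hr_def]
      have h1 : (N p : ℝ) ≠ 0 := ne_of_gt (hNpos p)
      have h2 : (N (p+1) : ℝ) ≠ 0 := ne_of_gt (hNpos (p+1))
      have h3 : (N p : ℝ) * (1 - (N p : ℝ) / N (p+1)) ≠ 0 := ne_of_gt (hc p)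
      have h4 : (N (p+1) : ℝ) - N p ≠ 0 := sub_ne_zero.mpr (hNlt p).ne'
      field_simp
      ring
    · have hp1q : B (p+1) ⊆ B q := hBmono hlt
      rw [Finset.inter_eq_left.mpr hp1q]
      rw [if_neg (Nat.ne_of_lt hlt), ← hN p, ← hN (p+1)]
      have h2 := hNpos (p+1)
      rw [hr_def]
      field_simp
      ring
  intro i j hi hj
  obtain ⟨p, rfl⟩ : ∃ p, i = p + 1 := ⟨i - 1, by omega⟩
  obtain ⟨q, rfl⟩ : ∃ q, j = q + 1 := ⟨j - 1, by omega⟩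
  rcases le_total p q with h | h
  · rw [key p q h]
    by_cases hpq : p = q <;> simp [hpq]
  · have h2 := key q p h
    rw [tsum_congr (fun x => mul_comm (φ (p+1) x) (φ (q+1) x)), h2]
    by_cases hpq : p = q <;> simp [hpq, Ne.symm]
end

section
/- With the setup of the spherically symmetric wavelet basis (φ_i as above) and assuming ∑_{i≥0} 1/N_i < ∞, for every i ≥ 0 the identity J_i = N_i ∑_{j=i+1}^∞ N_{j-1}^{-1/2} (1 - N_{j-1}/N_j)^{1/2} φ_j holds in ℓ²(U); i.e., the indicator of each ball B_i lies in the closed span of {φ_j}. -/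
open Filter

theorem stmt7 {U : Type*} [DecidableEq U] [Countable U]
    (B : ℕ → Finset U) (hmono : ∀ i, B i ⊆ B (i + 1))
    (x₀ : U) (hB0 : B 0 = {x₀})
    (N : ℕ → ℕ) (hN : ∀ i, N i = (B i).card) (hNs : StrictMono N)
    (hsum : Summable (fun i => (1 : ℝ) / N i))
    (φ : ℕ → U → ℝ)
    (hφ : ∀ i x, φ (i + 1) x =
      ((N i : ℝ) * (1 - (N i : ℝ) / N (i + 1))) ^ (-(1/2) : ℝ) *
        ((if x ∈ B i then (1:ℝ) else 0) -
          ((N i : ℝ) / N (i + 1)) * (if x ∈ B (i + 1) then (1:ℝ) else 0)))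
    (i : ℕ) :
    Tendsto (fun n : ℕ => ∑' x : U,
        ((if x ∈ B i then (1:ℝ) else 0) -
          (N i : ℝ) * ∑ j ∈ Finset.Icc (i+1) n,
            ((N (j-1) : ℝ) ^ (-(1/2):ℝ) * (1 - (N (j-1):ℝ)/(N j)) ^ ((1/2):ℝ)) * φ j x) ^ 2)
      atTop (nhds 0) := by
  have hN0 : N 0 = 1 := by rw [hN 0, hB0]; simp
  have hNpos : ∀ j, 0 < N j := fun j => by
    have := hNs.monotone (Nat.zero_le j); omega
  have key : ∀ j x, ((N j : ℝ) ^ (-(1/2):ℝ) * (1 - (N j:ℝ)/(N (j+1))) ^ ((1/2):ℝ)) * φ (j+1) x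
      = (if x ∈ B j then (1:ℝ) else 0) / N j
        - (if x ∈ B (j+1) then (1:ℝ) else 0) / N (j+1) := by
    intro j x
    have hNj : (0:ℝ) < N j := by exact_mod_cast hNpos j
    have hNj1 : (0:ℝ) < N (j+1) := by exact_mod_cast hNpos (j+1)
    have hr : (0:ℝ) < 1 - (N j:ℝ)/(N (j+1)) := by
      rw [sub_pos, div_lt_one hNj1]
      exact_mod_cast hNs (Nat.lt_succ_self j)
    rw [hφ, Real.mul_rpow hNj.le hr.le]
    have e1 : (N j : ℝ) ^ (-(1/2):ℝ) * (N j : ℝ) ^ (-(1/2):ℝ) = ((N j : ℝ))⁻¹ := by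
      rw [← Real.rpow_add hNj]
      norm_num
      exact Real.rpow_neg_one _
    have e2 : (1 - (N j:ℝ)/(N (j+1))) ^ ((1/2):ℝ) * (1 - (N j:ℝ)/(N (j+1))) ^ (-(1/2):ℝ) = 1 := by
      rw [← Real.rpow_add hr]
      norm_num
    have : ((N j : ℝ) ^ (-(1/2):ℝ) * (1 - (N j:ℝ)/(N (j+1))) ^ ((1/2):ℝ)) *
        ((N j : ℝ) ^ (-(1/2):ℝ) * (1 - (N j:ℝ)/(N (j+1))) ^ (-(1/2):ℝ)) = ((N j : ℝ))⁻¹ := by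
      rw [mul_mul_mul_comm, e1, e2, mul_one]
    rw [← mul_assoc, this]
    field_simp
  have tel : ∀ n, i ≤ n → ∀ x,
      ∑ j ∈ Finset.Icc (i+1) n,
        ((N (j-1) : ℝ) ^ (-(1/2):ℝ) * (1 - (N (j-1):ℝ)/(N j)) ^ ((1/2):ℝ)) * φ j x
      = (if x ∈ B i then (1:ℝ) else 0) / N i - (if x ∈ B n then (1:ℝ) else 0) / N n := by
    intro n hn
    induction n, hn using Nat.le_induction with
    | base => intro x; simp
    | succ n hn ih =>
      intro x
      rw [Finset.sum_Icc_succ_top (by omega), ih x]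
      have := key n x
      simp only [Nat.add_sub_cancel]
      rw [this]
      ring
  have hts : ∀ n, i ≤ n → (∑' x : U,
        ((if x ∈ B i then (1:ℝ) else 0) -
          (N i : ℝ) * ∑ j ∈ Finset.Icc (i+1) n,
            ((N (j-1) : ℝ) ^ (-(1/2):ℝ) * (1 - (N (j-1):ℝ)/(N j)) ^ ((1/2):ℝ)) * φ j x) ^ 2)
      = (N i : ℝ)^2 / N n := by
    intro n hn
    have hNi : (0:ℝ) < N i := by exact_mod_cast hNpos i
    have hNn : (0:ℝ) < N n := by exact_mod_cast hNpos n
    have hfx : ∀ x : U,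
        ((if x ∈ B i then (1:ℝ) else 0) -
          (N i : ℝ) * ∑ j ∈ Finset.Icc (i+1) n,
            ((N (j-1) : ℝ) ^ (-(1/2):ℝ) * (1 - (N (j-1):ℝ)/(N j)) ^ ((1/2):ℝ)) * φ j x) ^ 2
        = if x ∈ B n then ((N i : ℝ) / N n)^2 else 0 := by
      intro x
      rw [tel n hn x]
      have h1 : ∀ a b : ℝ, (a - (N i:ℝ) * (a / N i - b / N n))^2 = ((N i : ℝ) / N n)^2 * b^2 := by
        intro a b
        field_simp
        ring
      rw [h1]
      by_cases hx : x ∈ B n <;> simp [hx]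
    calc _ = ∑' x : U, if x ∈ B n then ((N i : ℝ) / N n)^2 else 0 := by
            exact tsum_congr hfx
      _ = ∑ x ∈ B n, if x ∈ B n then ((N i : ℝ) / N n)^2 else 0 :=
            tsum_eq_sum (fun x hx => by simp [hx])
      _ = (N n : ℝ) * ((N i : ℝ) / N n)^2 := by
            rw [Finset.sum_ite_mem, Finset.inter_self, Finset.sum_const, hN n]
            simp [mul_comm]
      _ = (N i : ℝ)^2 / N n := by field_simp
  have hNt : Tendsto (fun n => (N n : ℝ)) atTop atTop :=
    tendsto_natCast_atTop_atTop.comp hNs.tendsto_atTop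
  have hlim : Tendsto (fun n : ℕ => (N i : ℝ)^2 / N n) atTop (nhds 0) :=
    Tendsto.div_atTop tendsto_const_nhds hNt
  exact Tendsto.congr' ((eventually_ge_atTop i).mono fun n hn => (hts n hn).symm) hlim
end

section
/- Let U be a countable ultrametric space with distance values d₁ < d₂ < ⋯ from x₀, balls B_i of sizes N_i (N_0 = 1, N_i finite, strictly increasing), and assume ∑ 1/N_i < ∞ and ∑ e^{-α d_j} < ∞. Define the operator (Âf)(x) = ∑_{y≠x} K(d(x,y)) (f(y) - f(x)) with K(d) = N(d)^{-1} e^{-α d}, where N(d(x,y)) is the number of points within distance d(x,y) of x. Then for each i ≥ 1, Â(N_{i-1}^{-1} J_{i-1} - N_i^{-1} J_i) = -λ_i (N_{i-1}^{-1} J_{i-1} - N_i^{-1} J_i), where λ_i = ∑_{j=i}^∞ N_j (K(d_j) - K(d_{j+1})). -/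
open scoped Classical

set_option maxHeartbeats 1600000 in
theorem stmt8 {U : Type*} [Countable U]
    (d : U → U → ℝ)
    (hsymm : ∀ x y, d x y = d y x)
    (heq : ∀ x y, d x y = 0 ↔ x = y)
    (hultra : ∀ x y z, d x z ≤ max (d x y) (d y z))
    (x₀ : U)
    (ds : ℕ → ℝ) (hds0 : ds 0 = 0) (hdsmono : StrictMono ds)
    (hvals : ∀ x y : U, x ≠ y → ∃ i : ℕ, 1 ≤ i ∧ d x y = ds i)
    (hballfin : ∀ (x : U) (r : ℝ), {y : U | d x y ≤ r}.Finite)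
    (N : ℕ → ℕ) (hN : ∀ i, {y : U | d x₀ y ≤ ds i}.ncard = N i)
    (α : ℝ) (hα : 0 < α)
    (hNsum : Summable (fun i => (1 : ℝ) / N i))
    (hdsum : Summable (fun j => Real.exp (-α * ds j)))
    (K : U → U → ℝ)
    (hK : ∀ x y, K x y = Real.exp (-α * d x y) / ({z : U | d x z ≤ d x y}.ncard : ℝ))
    (Aop : (U → ℝ) → U → ℝ)
    (hAop : ∀ f x, Aop f x = ∑' y : U, (if y = x then 0 else K x y * (f y - f x)))
    (lam : ℕ → ℝ)
    (hlam : ∀ i, lam i = ∑' j : ℕ,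
      (N (i + j) : ℝ) * (Real.exp (-α * ds (i + j)) / N (i + j)
        - Real.exp (-α * ds (i + j + 1)) / N (i + j + 1)))
    (i : ℕ) (hi : 1 ≤ i) :
    ∀ x : U,
      Aop (fun z => (N (i-1) : ℝ)⁻¹ * (if d x₀ z ≤ ds (i-1) then 1 else 0)
            - (N i : ℝ)⁻¹ * (if d x₀ z ≤ ds i then 1 else 0)) x
        = -lam i * ((N (i-1) : ℝ)⁻¹ * (if d x₀ x ≤ ds (i-1) then 1 else 0)
            - (N i : ℝ)⁻¹ * (if d x₀ x ≤ ds i then 1 else 0)) := by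
  obtain ⟨p, rfl⟩ : ∃ p, i = p + 1 := ⟨i - 1, (Nat.succ_pred_eq_of_pos hi).symm⟩
  simp only [Nat.add_sub_cancel]
  intro x
  -- basic facts
  have hdself : ∀ y : U, d y y = 0 := fun y => (heq y y).2 rfl
  have hdsnn : ∀ j, 0 ≤ ds j := by
    intro j
    calc (0:ℝ) = ds 0 := hds0.symm
      _ ≤ ds j := hdsmono.monotone (Nat.zero_le j)
  have hL1 : ∀ (x' : U) (r : ℝ), d x₀ x' ≤ r →
      {z : U | d x' z ≤ r} = {z : U | d x₀ z ≤ r} := by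
    intro x' r h
    ext z
    simp only [Set.mem_setOf_eq]
    constructor
    · intro hz
      exact le_trans (hultra x₀ x' z) (max_le h hz)
    · intro hz
      refine le_trans (hultra x' x₀ z) (max_le ?_ hz)
      rw [hsymm]; exact h
  have hL2 : ∀ y z : U, d x₀ z < d x₀ y → d y z = d x₀ y := by
    intro y z h
    apply le_antisymm
    · exact le_trans (hultra y x₀ z) (max_le (le_of_eq (hsymm y x₀)) (le_of_lt h))
    · rcases le_max_iff.1 (hultra x₀ z y) with h1 | h1
      · exact absurd h1 (not_le.2 h)
      · rwa [hsymm y z]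
  have hlev' : ∀ (u v : U) (m : ℕ), ds m < d u v → d u v ≤ ds (m+1) → d u v = ds (m+1) := by
    intro u v m h1 h2
    have huv : u ≠ v := by
      intro h; subst h; rw [hdself] at h1
      exact absurd (hdsnn m) (not_le.2 h1)
    obtain ⟨k, _, hk⟩ := hvals u v huv
    rw [hk] at h1 h2 ⊢
    have hk1 : m < k := hdsmono.lt_iff_lt.1 h1
    have hk2 : k ≤ m + 1 := hdsmono.le_iff_le.1 h2
    congr 1
    omega
  -- ball finsets
  set B : ℕ → Finset U := fun j => (hballfin x₀ (ds j)).toFinset with hB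
  have hBmem : ∀ (j : ℕ) (y : U), y ∈ B j ↔ d x₀ y ≤ ds j := by
    intro j y; rw [hB]; exact Set.Finite.mem_toFinset _
  have hBcard : ∀ j, (B j).card = N j := by
    intro j
    rw [← hN j, Set.ncard_eq_toFinset_card _ (hballfin x₀ (ds j))]
  have hBmono : ∀ {j j' : ℕ}, j ≤ j' → B j ⊆ B j' := by
    intro j j' h y hy
    rw [hBmem] at hy ⊢
    exact le_trans hy (hdsmono.monotone h)
  have hx₀B : ∀ j, x₀ ∈ B j := by
    intro j; rw [hBmem, hdself]; exact hdsnn j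
  have hNpos : ∀ j, 0 < (N j : ℝ) := by
    intro j
    have h1 : 0 < (B j).card := Finset.card_pos.2 ⟨x₀, hx₀B j⟩
    rw [hBcard] at h1; exact_mod_cast h1
  have hNne : ∀ j, (N j : ℝ) ≠ 0 := fun j => ne_of_gt (hNpos j)
  have hNmono : ∀ {j j' : ℕ}, j ≤ j' → N j ≤ N j' := by
    intro j j' h
    rw [← hBcard, ← hBcard]; exact Finset.card_le_card (hBmono h)
  have hexh : ∀ t : Finset U, ∃ n : ℕ, ∀ y ∈ t, d x₀ y ≤ ds n := by
    intro t
    induction t using Finset.induction with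
    | empty => exact ⟨0, by simp⟩
    | @insert a s _ ih =>
      obtain ⟨n, hn⟩ := ih
      have ha : ∃ m : ℕ, d x₀ a ≤ ds m := by
        rcases eq_or_ne x₀ a with rfl | h
        · exact ⟨0, by rw [hdself]; exact hdsnn 0⟩
        · obtain ⟨k, _, hk⟩ := hvals x₀ a h
          exact ⟨k, le_of_eq hk⟩
      obtain ⟨m, hm⟩ := ha
      refine ⟨max n m, fun y hy => ?_⟩
      rcases Finset.mem_insert.1 hy with rfl | hy
      · exact le_trans hm (hdsmono.monotone (le_max_right n m))
      · exact le_trans (hn y hy) (hdsmono.monotone (le_max_left n m))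
  rw [hAop]
  set φ : U → ℝ := fun z => (N p : ℝ)⁻¹ * (if d x₀ z ≤ ds p then 1 else 0)
      - (N (p+1) : ℝ)⁻¹ * (if d x₀ z ≤ ds (p+1) then 1 else 0) with hφ
  have hφdef : ∀ z, φ z = (N p : ℝ)⁻¹ * (if d x₀ z ≤ ds p then 1 else 0)
      - (N (p+1) : ℝ)⁻¹ * (if d x₀ z ≤ ds (p+1) then 1 else 0) := fun z => by rw [hφ]
  rw [show (N p : ℝ)⁻¹ * (if d x₀ x ≤ ds p then 1 else 0)
      - (N (p+1) : ℝ)⁻¹ * (if d x₀ x ≤ ds (p+1) then 1 else 0) = φ x from (hφdef x).symm]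
  -- sum of φ over B (p+1) is zero
  have hindic : ∀ a b : ℕ, a ≤ b →
      ∑ y ∈ B b, (if d x₀ y ≤ ds a then (1:ℝ) else 0) = N a := by
    intro a b hab
    rw [Finset.sum_boole]
    have h1 : (B b).filter (fun y => d x₀ y ≤ ds a) = B a := by
      ext y
      simp only [Finset.mem_filter, hBmem]
      exact ⟨fun h => h.2, fun h => ⟨le_trans h (hdsmono.monotone hab), h⟩⟩
    rw [h1, hBcard]
  have hsumφ : ∑ y ∈ B (p+1), φ y = 0 := by
    rw [Finset.sum_congr rfl (fun y _ => hφdef y), Finset.sum_sub_distrib,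
      ← Finset.mul_sum, ← Finset.mul_sum,
      hindic p (p+1) (Nat.le_succ p), hindic (p+1) (p+1) le_rfl,
      inv_mul_cancel₀ (hNne p), inv_mul_cancel₀ (hNne (p+1))]
    ring
  by_cases hx : d x₀ x ≤ ds (p+1)
  case neg =>
    -- x outside B_{p+1} : both sides vanish
    have hφx : φ x = 0 := by
      rw [hφdef x, if_neg hx,
        if_neg (fun h => hx (le_trans h (hdsmono.monotone (Nat.le_succ p))))]
      ring
    have hz : ∀ y ∉ B (p+1), (if y = x then 0 else K x y * (φ y - φ x)) = 0 := by
      intro y hy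
      rcases eq_or_ne y x with rfl | hyx
      · rw [if_pos rfl]
      · rw [if_neg hyx]
        rw [hBmem] at hy
        have hφy : φ y = 0 := by
          rw [hφdef y, if_neg hy,
            if_neg (fun h => hy (le_trans h (hdsmono.monotone (Nat.le_succ p))))]
          ring
        rw [hφy, hφx]; ring
    have hconst : ∀ y ∈ B (p+1), (if y = x then 0 else K x y * (φ y - φ x)) = K x x₀ * φ y := by
      intro y hy
      rw [hBmem] at hy
      have hyx : y ≠ x := by
        intro h; subst h; exact hx hy
      rw [if_neg hyx, hφx, sub_zero]
      have hdx : d x y = d x₀ x :=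
        hL2 x y (lt_of_le_of_lt hy (not_le.1 hx))
      rw [hK, hK, hdx, hsymm x x₀]
    rw [tsum_eq_sum hz, Finset.sum_congr rfl hconst, ← Finset.mul_sum, hsumφ,
      mul_zero, hφx, mul_zero]
  case pos =>
    -- main case : x ∈ B_{p+1}
    have hexple : ∀ m : ℕ, Real.exp (-α * ds (m+1)) ≤ Real.exp (-α * ds m) := by
      intro m
      apply Real.exp_le_exp.2
      have h1 := hdsmono.monotone (Nat.le_succ m)
      nlinarith
    -- Step A: telescoping of lam
    have hann : ∀ j : ℕ, (0:ℝ) ≤ (N (p+1+j) : ℝ) * (Real.exp (-α * ds (p+1+j)) / N (p+1+j)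
        - Real.exp (-α * ds (p+1+j+1)) / N (p+1+j+1)) := by
      intro j
      apply mul_nonneg (le_of_lt (hNpos _))
      rw [sub_nonneg]
      exact div_le_div₀ (Real.exp_nonneg _) (hexple _) (hNpos _)
        (by exact_mod_cast hNmono (Nat.le_succ _))
    have hale : ∀ j : ℕ, (N (p+1+j) : ℝ) * (Real.exp (-α * ds (p+1+j)) / N (p+1+j)
        - Real.exp (-α * ds (p+1+j+1)) / N (p+1+j+1)) ≤ Real.exp (-α * ds (p+1+j)) := by
      intro j
      have h1 : (0:ℝ) ≤ Real.exp (-α * ds (p+1+j+1)) / N (p+1+j+1) :=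
        div_nonneg (Real.exp_nonneg _) (le_of_lt (hNpos _))
      calc (N (p+1+j) : ℝ) * (Real.exp (-α * ds (p+1+j)) / N (p+1+j)
            - Real.exp (-α * ds (p+1+j+1)) / N (p+1+j+1))
          ≤ (N (p+1+j) : ℝ) * (Real.exp (-α * ds (p+1+j)) / N (p+1+j)) := by
            apply mul_le_mul_of_nonneg_left _ (le_of_lt (hNpos _))
            linarith
        _ = Real.exp (-α * ds (p+1+j)) := by
            rw [mul_comm, div_mul_cancel₀ _ (hNne _)]
    have hesum : ∀ k : ℕ, Summable (fun j : ℕ => Real.exp (-α * ds (k + j))) := by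
      intro k
      have h1 : Summable (fun j : ℕ => Real.exp (-α * ds (j + k))) :=
        (summable_nat_add_iff k).2 hdsum
      exact h1.congr (fun j => by rw [add_comm])
    have hbnn : ∀ j : ℕ, (0:ℝ) ≤ ((N (p+1+j+1) : ℝ) - N (p+1+j)) *
        (Real.exp (-α * ds (p+1+j+1)) / N (p+1+j+1)) := by
      intro j
      apply mul_nonneg
      · rw [sub_nonneg]
        exact_mod_cast hNmono (Nat.le_succ _)
      · exact div_nonneg (Real.exp_nonneg _) (le_of_lt (hNpos _))
    have hble : ∀ j : ℕ, ((N (p+1+j+1) : ℝ) - N (p+1+j)) *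
        (Real.exp (-α * ds (p+1+j+1)) / N (p+1+j+1)) ≤ Real.exp (-α * ds (p+2+j)) := by
      intro j
      have hidx : p+2+j = p+1+j+1 := by omega
      rw [hidx]
      calc ((N (p+1+j+1) : ℝ) - N (p+1+j)) * (Real.exp (-α * ds (p+1+j+1)) / N (p+1+j+1))
          ≤ (N (p+1+j+1) : ℝ) * (Real.exp (-α * ds (p+1+j+1)) / N (p+1+j+1)) := by
            apply mul_le_mul_of_nonneg_right _
              (div_nonneg (Real.exp_nonneg _) (le_of_lt (hNpos _)))
            have h2 : (0:ℝ) ≤ (N (p+1+j) : ℝ) := le_of_lt (hNpos _)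
            linarith
        _ = Real.exp (-α * ds (p+1+j+1)) := by
            rw [mul_comm, div_mul_cancel₀ _ (hNne _)]
    have hbsum : Summable (fun j : ℕ => ((N (p+1+j+1) : ℝ) - N (p+1+j)) *
        (Real.exp (-α * ds (p+1+j+1)) / N (p+1+j+1))) :=
      Summable.of_nonneg_of_le hbnn hble (hesum (p+2))
    have hasum : Summable (fun j : ℕ => (N (p+1+j) : ℝ) * (Real.exp (-α * ds (p+1+j)) / N (p+1+j)
        - Real.exp (-α * ds (p+1+j+1)) / N (p+1+j+1))) :=
      Summable.of_nonneg_of_le hann hale (hesum (p+1))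
    have hiden : ∀ n : ℕ, ∑ j ∈ Finset.range n,
        (N (p+1+j) : ℝ) * (Real.exp (-α * ds (p+1+j)) / N (p+1+j)
          - Real.exp (-α * ds (p+1+j+1)) / N (p+1+j+1))
        = Real.exp (-α * ds (p+1)) - Real.exp (-α * ds (p+1+n))
          + ∑ j ∈ Finset.range n, ((N (p+1+j+1) : ℝ) - N (p+1+j)) *
            (Real.exp (-α * ds (p+1+j+1)) / N (p+1+j+1)) := by
      intro n
      induction n with
      | zero =>
        rw [Finset.sum_range_zero, Finset.sum_range_zero, Nat.add_zero]
        ring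
      | succ n ih =>
        simp only [show p+1+(n+1) = p+1+n+1 from by omega]
        rw [Finset.sum_range_succ, Finset.sum_range_succ, ih]
        have hc1 : (N (p+1+n) : ℝ) * (Real.exp (-α * ds (p+1+n)) / N (p+1+n))
            = Real.exp (-α * ds (p+1+n)) := by
          rw [mul_comm, div_mul_cancel₀ _ (hNne _)]
        have hc2 : (N (p+1+n+1) : ℝ) * (Real.exp (-α * ds (p+1+n+1)) / N (p+1+n+1))
            = Real.exp (-α * ds (p+1+n+1)) := by
          rw [mul_comm, div_mul_cancel₀ _ (hNne _)]
        linear_combination hc1 - hc2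
    have htend0 : Filter.Tendsto (fun n : ℕ => Real.exp (-α * ds (p+1+n)))
        Filter.atTop (nhds 0) := by
      have h1 : Filter.Tendsto (fun j : ℕ => Real.exp (-α * ds j)) Filter.atTop (nhds 0) :=
        hdsum.tendsto_atTop_zero
      have h2 : Filter.Tendsto (fun n : ℕ => p+1+n) Filter.atTop Filter.atTop :=
        Filter.tendsto_atTop_mono (fun n => Nat.le_add_left n (p+1)) Filter.tendsto_id
      exact h1.comp h2
    have hA : lam (p+1) = Real.exp (-α * ds (p+1))
        + ∑' j : ℕ, ((N (p+1+j+1) : ℝ) - N (p+1+j)) *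
          (Real.exp (-α * ds (p+1+j+1)) / N (p+1+j+1)) := by
      have hs : HasSum (fun j : ℕ => (N (p+1+j) : ℝ) * (Real.exp (-α * ds (p+1+j)) / N (p+1+j)
          - Real.exp (-α * ds (p+1+j+1)) / N (p+1+j+1)))
          (Real.exp (-α * ds (p+1)) + ∑' j : ℕ, ((N (p+1+j+1) : ℝ) - N (p+1+j)) *
            (Real.exp (-α * ds (p+1+j+1)) / N (p+1+j+1))) := by
        rw [hasSum_iff_tendsto_nat_of_nonneg hann]
        have h1 : Filter.Tendsto (fun n : ℕ => Real.exp (-α * ds (p+1))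
            - Real.exp (-α * ds (p+1+n))
            + ∑ j ∈ Finset.range n, ((N (p+1+j+1) : ℝ) - N (p+1+j)) *
              (Real.exp (-α * ds (p+1+j+1)) / N (p+1+j+1)))
            Filter.atTop (nhds (Real.exp (-α * ds (p+1)) - 0
              + ∑' j : ℕ, ((N (p+1+j+1) : ℝ) - N (p+1+j)) *
                (Real.exp (-α * ds (p+1+j+1)) / N (p+1+j+1)))) :=
          (tendsto_const_nhds.sub htend0).add hbsum.hasSum.tendsto_sum_nat
        rw [sub_zero] at h1
        exact Filter.Tendsto.congr (fun n => (hiden n).symm) h1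
      rw [hlam]
      exact hs.tsum_eq
    -- the outside-ball weight function
    set wOut : U → ℝ := fun y => if d x₀ y ≤ ds (p+1) then 0 else K x₀ y with hwOut
    have hwdef : ∀ y, wOut y = if d x₀ y ≤ ds (p+1) then 0 else K x₀ y := fun y => by rw [hwOut]
    have hwnn : ∀ y, 0 ≤ wOut y := by
      intro y
      rw [hwdef y]
      split
      · exact le_rfl
      · rw [hK]
        exact div_nonneg (Real.exp_nonneg _) (Nat.cast_nonneg _)
    have hpart : ∀ n : ℕ, ∑ y ∈ B (p+1+n), wOut y
        = ∑ j ∈ Finset.range n, ((N (p+1+j+1) : ℝ) - N (p+1+j)) *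
          (Real.exp (-α * ds (p+1+j+1)) / N (p+1+j+1)) := by
      intro n
      induction n with
      | zero =>
        rw [Finset.sum_range_zero]
        apply Finset.sum_eq_zero
        intro y hy
        rw [hBmem] at hy
        rw [hwdef y, if_pos hy]
      | succ n ih =>
        have hsub : B (p+1+n) ⊆ B (p+1+n+1) := hBmono (Nat.le_succ _)
        rw [Finset.sum_range_succ, ← ih, ← Finset.sum_sdiff hsub, add_comm]
        congr 1
        have hconst : ∀ y ∈ B (p+1+n+1) \ B (p+1+n),
            wOut y = Real.exp (-α * ds (p+1+n+1)) / N (p+1+n+1) := by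
          intro y hy
          rw [Finset.mem_sdiff, hBmem, hBmem] at hy
          obtain ⟨hy1, hy2⟩ := hy
          have hdy : d x₀ y = ds (p+1+n+1) := hlev' x₀ y (p+1+n) (not_le.1 hy2) hy1
          have hnotin : ¬ d x₀ y ≤ ds (p+1) := fun h =>
            hy2 (le_trans h (hdsmono.monotone (by omega)))
          rw [hwdef y, if_neg hnotin, hK, hdy, hN]
        rw [Finset.sum_congr rfl hconst, Finset.sum_const,
          Finset.card_sdiff_of_subset hsub, hBcard, hBcard, nsmul_eq_mul,
          Nat.cast_sub (hNmono (Nat.le_succ _))]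
    have hub : ∀ t : Finset U, ∑ y ∈ t, wOut y
        ≤ ∑' j : ℕ, ((N (p+1+j+1) : ℝ) - N (p+1+j)) *
          (Real.exp (-α * ds (p+1+j+1)) / N (p+1+j+1)) := by
      intro t
      obtain ⟨n, hn⟩ := hexh t
      have hts : t ⊆ B (p+1+n) := by
        intro y hy
        rw [hBmem]
        exact le_trans (hn y hy) (hdsmono.monotone (by omega))
      calc ∑ y ∈ t, wOut y ≤ ∑ y ∈ B (p+1+n), wOut y :=
            Finset.sum_le_sum_of_subset_of_nonneg hts (fun y _ _ => hwnn y)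
        _ = ∑ j ∈ Finset.range n, ((N (p+1+j+1) : ℝ) - N (p+1+j)) *
            (Real.exp (-α * ds (p+1+j+1)) / N (p+1+j+1)) := hpart n
        _ ≤ _ := Summable.sum_le_tsum (Finset.range n) (fun j _ => hbnn j) hbsum
    have hw : HasSum wOut (∑' j : ℕ, ((N (p+1+j+1) : ℝ) - N (p+1+j)) *
        (Real.exp (-α * ds (p+1+j+1)) / N (p+1+j+1))) := by
      apply hasSum_of_isLUB_of_nonneg _ hwnn
      constructor
      · rintro r ⟨t, rfl⟩
        exact hub t
      · intro c hc
        apply Real.tsum_le_of_sum_range_le hbnn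
        intro n
        rw [← hpart n]
        exact hc ⟨B (p+1+n), rfl⟩
    -- decomposition of the summand
    set gfin : U → ℝ := fun y => if d x₀ y ≤ ds (p+1) ∧ y ≠ x then K x y * (φ y - φ x) else 0
      with hgfin
    have hgdef : ∀ y, gfin y = if d x₀ y ≤ ds (p+1) ∧ y ≠ x then K x y * (φ y - φ x) else 0 :=
      fun y => by rw [hgfin]
    have hgsplit : ∀ y : U, (if y = x then 0 else K x y * (φ y - φ x))
        = gfin y + (-φ x) * wOut y := by
      intro y
      rcases eq_or_ne y x with rfl | hyx
      · rw [if_pos rfl, hgdef y, hwdef y, if_neg (by simp), if_pos hx]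
        ring
      · rw [if_neg hyx]
        by_cases hy : d x₀ y ≤ ds (p+1)
        · rw [hgdef y, hwdef y, if_pos ⟨hy, hyx⟩, if_pos hy]
          ring
        · have hφy : φ y = 0 := by
            rw [hφdef y, if_neg hy,
              if_neg (fun h => hy (le_trans h (hdsmono.monotone (Nat.le_succ p))))]
            ring
          have hKeq : K x y = K x₀ y := by
            have hlt : d x₀ x < d x₀ y := lt_of_le_of_lt hx (not_le.1 hy)
            have hdxy : d x y = d x₀ y := by
              rw [hsymm x y]
              exact hL2 y x hlt
            rw [hK, hK, hdxy, hL1 x (d x₀ y) (le_of_lt hlt)]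
          rw [hgdef y, hwdef y, if_neg (fun h => hy h.1), if_neg hy, hφy, hKeq]
          ring
    have hgfin0 : ∀ y ∉ B (p+1), gfin y = 0 := by
      intro y hy
      rw [hBmem] at hy
      rw [hgdef y, if_neg (fun h => hy h.1)]
    have hsubp : B p ⊆ B (p+1) := hBmono (Nat.le_succ p)
    -- the finite part sums to -φ x * exp (-α ds (p+1))
    have hFsum : ∑ y ∈ B (p+1), gfin y = -φ x * Real.exp (-α * ds (p+1)) := by
      rw [← Finset.sum_sdiff hsubp]
      by_cases hx' : d x₀ x ≤ ds p
      · -- x ∈ B p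
        have hφx : φ x = (N p : ℝ)⁻¹ - (N (p+1) : ℝ)⁻¹ := by
          rw [hφdef x, if_pos hx', if_pos hx]
          ring
        have hinner : ∑ y ∈ B p, gfin y = 0 := by
          apply Finset.sum_eq_zero
          intro y hy
          rw [hBmem] at hy
          rw [hgdef y]
          split
          · have hφy : φ y = φ x := by
              rw [hφdef y, hφx, if_pos hy,
                if_pos (le_trans hy (hdsmono.monotone (Nat.le_succ p)))]
              ring
            rw [hφy]
            ring
          · rfl
        have houter : ∀ y ∈ B (p+1) \ B p,
            gfin y = Real.exp (-α * ds (p+1)) / N (p+1) * (-(N p : ℝ)⁻¹) := by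
          intro y hy
          rw [Finset.mem_sdiff, hBmem, hBmem] at hy
          obtain ⟨hy1, hy2⟩ := hy
          have hy2' : ds p < d x₀ y := not_le.1 hy2
          have hyx : y ≠ x := by
            intro h; subst h; exact hy2 hx'
          have hφy : φ y = -(N (p+1) : ℝ)⁻¹ := by
            rw [hφdef y, if_neg hy2, if_pos hy1]
            ring
          have hdxy : d x y = ds (p+1) := by
            apply hlev' x y p
            · by_contra h
              push_neg at h
              exact absurd (le_trans (hultra x₀ x y) (max_le hx' h)) (not_le.2 hy2')
            · refine le_trans (hultra x x₀ y) (max_le ?_ hy1)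
              rw [hsymm x x₀]
              exact le_trans hx' (hdsmono.monotone (Nat.le_succ p))
          rw [hgdef y, if_pos ⟨hy1, hyx⟩, hK, hdxy, hL1 x (ds (p+1)) hx, hN, hφy, hφx]
          ring
        rw [hinner, add_zero, Finset.sum_congr rfl houter, Finset.sum_const,
          Finset.card_sdiff_of_subset hsubp, hBcard, hBcard, nsmul_eq_mul,
          Nat.cast_sub (hNmono (Nat.le_succ p)), hφx]
        field_simp [hNne p, hNne (p+1)]
      · -- x ∈ B (p+1) \ B p
        have hdx : d x₀ x = ds (p+1) := hlev' x₀ x p (not_le.1 hx') hx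
        have hφx : φ x = -(N (p+1) : ℝ)⁻¹ := by
          rw [hφdef x, if_neg hx', if_pos hx]
          ring
        have houter : ∑ y ∈ B (p+1) \ B p, gfin y = 0 := by
          apply Finset.sum_eq_zero
          intro y hy
          rw [Finset.mem_sdiff, hBmem, hBmem] at hy
          obtain ⟨hy1, hy2⟩ := hy
          rw [hgdef y]
          split
          · have hφy : φ y = φ x := by
              rw [hφdef y, hφx, if_neg hy2, if_pos hy1]
              ring
            rw [hφy]
            ring
          · rfl
        have hinner : ∀ y ∈ B p,
            gfin y = Real.exp (-α * ds (p+1)) / N (p+1) * (N p : ℝ)⁻¹ := by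
          intro y hy
          rw [hBmem] at hy
          have hyx : y ≠ x := by
            intro h; subst h; exact hx' hy
          have hφy : φ y = (N p : ℝ)⁻¹ - (N (p+1) : ℝ)⁻¹ := by
            rw [hφdef y, if_pos hy, if_pos (le_trans hy (hdsmono.monotone (Nat.le_succ p)))]
            ring
          have hdxy : d x y = ds (p+1) := by
            rw [hL2 x y (lt_of_le_of_lt hy (hdx ▸ hdsmono (Nat.lt_succ_self p))), hdx]
          rw [hgdef y, if_pos ⟨le_trans hy (hdsmono.monotone (Nat.le_succ p)), hyx⟩,
            hK, hdxy, hL1 x (ds (p+1)) hx, hN, hφy, hφx]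
          ring
        rw [houter, zero_add, Finset.sum_congr rfl hinner, Finset.sum_const,
          hBcard, nsmul_eq_mul, hφx]
        field_simp [hNne p, hNne (p+1)]
    -- assemble
    have h2 : HasSum (fun y : U => gfin y + (-φ x) * wOut y)
        ((∑ y ∈ B (p+1), gfin y) + (-φ x) * ∑' j : ℕ, ((N (p+1+j+1) : ℝ) - N (p+1+j)) *
          (Real.exp (-α * ds (p+1+j+1)) / N (p+1+j+1))) :=
      (hasSum_sum_of_ne_finset_zero hgfin0).add (hw.mul_left (-φ x))
    rw [tsum_congr hgsplit, h2.tsum_eq, hFsum, hA]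
    ring
end

section
/- Suppose d_i = ξ i + δ_i and N_i = C^{-1} e^{θ i}(1 + ε_i) with ξ, θ, C > 0, δ_i → D and ε_i → 0 (ε_i > -1) as i → ∞. Let λ_i = ∑_{j=i}^∞ e^{-α d_j}(1 - e^{-α(d_{j+1}-d_j)} N_j/N_{j+1}) with α > 0. Then lim_{i→∞} λ_i e^{αξ i} = ((1 - e^{-θ} e^{-αξ})/(1 - e^{-αξ})) · e^{-αD}. -/
open Filter

theorem stmt9 (ξ θ C D α : ℝ) (hξ : 0 < ξ) (hθ : 0 < θ) (hC : 0 < C) (hα : 0 < α)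
    (δ ε : ℕ → ℝ) (hδ : Tendsto δ atTop (nhds D)) (hε : Tendsto ε atTop (nhds 0))
    (hε1 : ∀ i, -1 < ε i)
    (d N : ℕ → ℝ)
    (hd : ∀ i, d i = ξ * i + δ i)
    (hN : ∀ i, N i = C⁻¹ * Real.exp (θ * i) * (1 + ε i))
    (hdmono : StrictMono d) (hNmono : StrictMono N) (hdpos : ∀ i, 0 < d i)
    (lam : ℕ → ℝ)
    (hlam : ∀ i, lam i = ∑' j : ℕ, Real.exp (-α * d (i + j)) *
      (1 - Real.exp (-α * (d (i + j + 1) - d (i + j))) * (N (i + j) / N (i + j + 1)))) :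
    Tendsto (fun i => lam i * Real.exp (α * ξ * i)) atTop
      (nhds (((1 - Real.exp (-θ) * Real.exp (-(α * ξ))) / (1 - Real.exp (-(α * ξ)))) *
        Real.exp (-(α * D)))) := by
  set r : ℝ := Real.exp (-(α * ξ)) with hr_def
  have hr0 : 0 < r := Real.exp_pos _
  have hr1 : r < 1 := by
    rw [hr_def]
    apply Real.exp_lt_one_iff.mpr
    nlinarith
  have hεpos : ∀ k, (0:ℝ) < 1 + ε k := fun k => by linarith [hε1 k]
  set h : ℕ → ℝ := fun k => Real.exp (-α * δ k) *
    (1 - Real.exp (-α * (ξ + δ (k+1) - δ k)) * Real.exp (-θ) * ((1 + ε k) / (1 + ε (k+1))))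
    with hh_def
  set L : ℝ := Real.exp (-(α * D)) * (1 - Real.exp (-θ) * r) with hL_def
  have hδ1 : Tendsto (fun k => δ (k+1)) atTop (nhds D) :=
    hδ.comp (tendsto_add_atTop_nat 1)
  have hε1' : Tendsto (fun k => ε (k+1)) atTop (nhds 0) :=
    hε.comp (tendsto_add_atTop_nat 1)
  have hL : Tendsto h atTop (nhds L) := by
    have t1 : Tendsto (fun k => Real.exp (-α * δ k)) atTop (nhds (Real.exp (-α * D))) :=
      (Real.continuous_exp.tendsto _).comp (tendsto_const_nhds.mul hδ)
    have t2 : Tendsto (fun k => Real.exp (-α * (ξ + δ (k+1) - δ k))) atTop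
        (nhds (Real.exp (-α * (ξ + D - D)))) :=
      (Real.continuous_exp.tendsto _).comp
        (tendsto_const_nhds.mul ((tendsto_const_nhds.add hδ1).sub hδ))
    have t3 : Tendsto (fun k => (1 + ε k) / (1 + ε (k+1))) atTop (nhds ((1+0)/(1+0))) :=
      (tendsto_const_nhds.add hε).div (tendsto_const_nhds.add hε1') (by norm_num)
    have tall : Tendsto h atTop (nhds (Real.exp (-α * D) *
        (1 - Real.exp (-α * (ξ + D - D)) * Real.exp (-θ) * ((1+(0:ℝ))/(1+0))))) :=
      t1.mul ((tendsto_const_nhds.sub ((t2.mul tendsto_const_nhds).mul t3)))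
    have hLval : Real.exp (-α * D) *
        (1 - Real.exp (-α * (ξ + D - D)) * Real.exp (-θ) * ((1+(0:ℝ))/(1+0))) = L := by
      rw [hL_def, hr_def, show -α*(ξ+D-D) = -(α*ξ) by ring, show -α*D = -(α*D) by ring]
      norm_num
      ring
    rw [hLval] at tall
    exact tall
  obtain ⟨M, hM⟩ : ∃ M : ℝ, ∀ k, |h k| ≤ M := by
    obtain ⟨M, hM⟩ := (hL.abs.isBoundedUnder_le).bddAbove_range
    exact ⟨M, fun k => hM ⟨k, rfl⟩⟩
  have key : ∀ i, lam i * Real.exp (α * ξ * i) = ∑' j : ℕ, r ^ j * h (i + j) := by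
    intro i
    rw [hlam, ← tsum_mul_right]
    congr 1
    ext j
    have hNe : (0:ℝ) < 1 + ε (i+j+1) := hεpos _
    have hNe0 : (0:ℝ) < 1 + ε (i+j) := hεpos _
    have hratio : N (i+j) / N (i+j+1) =
        Real.exp (-θ) * ((1 + ε (i+j)) / (1 + ε (i+j+1))) := by
      rw [hN, hN]
      push_cast
      rw [show θ * ((i:ℝ) + j + 1) = θ * ((i:ℝ) + j) + θ by ring, Real.exp_add, Real.exp_neg]
      have e1 := Real.exp_ne_zero (θ * ((i:ℝ) + j))
      have e2 := Real.exp_ne_zero θ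
      field_simp
    have hdd : d (i+j+1) - d (i+j) = ξ + δ (i+j+1) - δ (i+j) := by
      rw [hd, hd]; push_cast; ring
    rw [hratio, hdd, hd, hr_def, ← Real.exp_nat_mul]
    simp only [hh_def]
    push_cast
    have e1 : Real.exp (-α * (ξ * ((i:ℝ) + j) + δ (i+j))) * Real.exp (α * ξ * i)
        = Real.exp ((j:ℝ) * -(α * ξ)) * Real.exp (-α * δ (i+j)) := by
      rw [← Real.exp_add, ← Real.exp_add]; ring_nf
    linear_combination (1 - Real.exp (-α * (ξ + δ (i+j+1) - δ (i+j))) * Real.exp (-θ) *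
      ((1 + ε (i+j)) / (1 + ε (i+j+1)))) * e1
  simp only [key]
  have hsum : Summable (fun j : ℕ => M * r ^ j) :=
    (summable_geometric_of_lt_one hr0.le hr1).mul_left M
  have hfinal : (∑' j : ℕ, r ^ j * L) =
      ((1 - Real.exp (-θ) * r) / (1 - r)) * Real.exp (-(α * D)) := by
    rw [tsum_mul_right, tsum_geometric_of_lt_one hr0.le hr1, hL_def]
    have h1 : (1:ℝ) - r ≠ 0 := by linarith
    field_simp
  rw [← hfinal]
  refine tendsto_tsum_of_dominated_convergence (f := fun i (j : ℕ) => r ^ j * h (i + j))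
    (g := fun j : ℕ => r ^ j * L) (bound := fun j : ℕ => M * r ^ j) hsum ?_ ?_
  · intro j
    exact tendsto_const_nhds.mul (hL.comp (tendsto_add_atTop_nat j))
  · filter_upwards with i j
    rw [Real.norm_eq_abs, abs_mul, abs_of_pos (pow_pos hr0 j), mul_comm]
    exact mul_le_mul_of_nonneg_right (hM _) (pow_pos hr0 j).le
end

section
/- Let θ > 0, ξ > 0, α > 0 be real numbers, and let (N_i), (d_i) satisfy: there exist A, A' > 0 with A < N_i^{-1} e^{θ i} < A' for all i > 0, and there exist B > 0, with |d_i - ξ i| < B for all i > 0. Define λ_i = ∑_{j=i}^∞ e^{-α d_j}(1 - e^{-α(d_{j+1}-d_j)} N_j/N_{j+1}) and a_i = N_{i-1}^{-1}(1 - N_{i-1}/N_i). Then the sequences (λ_i e^{αξ i}) and (a_i e^{θ i}) are bounded, and consequently the function f(t) = ∑_{i=1}^∞ a_i exp(-λ_i t) satisfies: there exist 0 < c ≤ C with c t^{-θ/(αξ)} ≤ f(t) ≤ C t^{-θ/(αξ)} for all sufficiently large t. -/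
open Real Filter Finset

set_option maxHeartbeats 1000000 in
theorem stmt11 (θ ξ α : ℝ) (hθ : 0 < θ) (hξ : 0 < ξ) (hα : 0 < α)
    (N : ℕ → ℕ) (hNmono : StrictMono N) (hN0 : N 0 = 1)
    (d : ℕ → ℝ) (hdmono : StrictMono d) (hdpos : ∀ i, 0 < d i)
    (A A' : ℝ) (hA : 0 < A) (hA' : 0 < A')
    (hNbd : ∀ i : ℕ, 1 ≤ i → A < (N i : ℝ)⁻¹ * Real.exp (θ * i) ∧
      (N i : ℝ)⁻¹ * Real.exp (θ * i) < A')
    (B : ℝ) (hB : 0 < B) (hdbd : ∀ i : ℕ, 1 ≤ i → |d i - ξ * i| < B)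
    (lam : ℕ → ℝ)
    (hlam : ∀ i, lam i = ∑' j : ℕ, Real.exp (-α * d (i + j)) *
      (1 - Real.exp (-α * (d (i + j + 1) - d (i + j))) * ((N (i + j) : ℝ) / N (i + j + 1))))
    (a : ℕ → ℝ)
    (ha : ∀ i, a (i + 1) = (N i : ℝ)⁻¹ * (1 - (N i : ℝ) / N (i + 1))) :
    (∃ M : ℝ, ∀ i, |lam i * Real.exp (α * ξ * i)| ≤ M) ∧
    (∃ M : ℝ, ∀ i : ℕ, |a (i + 1) * Real.exp (θ * (i + 1))| ≤ M) ∧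
    ∃ c C : ℝ, 0 < c ∧ c ≤ C ∧ ∃ T : ℝ, ∀ t ≥ T,
      c * t ^ (-(θ / (α * ξ))) ≤ (∑' i : ℕ, a (i + 1) * Real.exp (-(lam (i + 1)) * t)) ∧
      (∑' i : ℕ, a (i + 1) * Real.exp (-(lam (i + 1)) * t)) ≤ C * t ^ (-(θ / (α * ξ))) := by
  have hαξ : 0 < α * ξ := mul_pos hα hξ
  -- basic facts about N
  have hNpos : ∀ k, (0:ℝ) < (N k : ℝ) := by
    intro k
    have : 1 ≤ N k := hN0 ▸ hNmono.monotone (Nat.zero_le k)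
    exact_mod_cast Nat.lt_of_lt_of_le Nat.zero_lt_one this
  have hNratio1 : ∀ k, ((N k : ℝ) / N (k+1)) ≤ 1 := by
    intro k
    rw [div_le_one (hNpos (k+1))]
    exact_mod_cast (hNmono (Nat.lt_succ_self k)).le
  have hNratio0 : ∀ k, 0 ≤ ((N k : ℝ) / N (k+1)) := fun k =>
    div_nonneg (hNpos k).le (hNpos (k+1)).le
  -- bounds on d
  have hd_ub : ∀ k, 1 ≤ k → d k < ξ * k + B := by
    intro k hk; have := (abs_lt.1 (hdbd k hk)).2; linarith
  have hd_lb : ∀ k, 1 ≤ k → ξ * k - B < d k := by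
    intro k hk; have := (abs_lt.1 (hdbd k hk)).1; linarith
  -- the terms of the lambda series
  set s : ℕ → ℕ → ℝ := fun i j => Real.exp (-α * d (i + j)) *
      (1 - Real.exp (-α * (d (i + j + 1) - d (i + j))) * ((N (i + j) : ℝ) / N (i + j + 1)))
    with hs_def
  have hlam' : ∀ i, lam i = ∑' j : ℕ, s i j := hlam
  have hs_factor : ∀ i j, Real.exp (-α * (d (i + j + 1) - d (i + j))) *
      ((N (i + j) : ℝ) / N (i + j + 1)) ≤ 1 := by
    intro i j
    have h1 : Real.exp (-α * (d (i + j + 1) - d (i + j))) ≤ 1 := by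
      apply Real.exp_le_one_iff.2
      have : d (i + j) < d (i + j + 1) := hdmono (Nat.lt_succ_self _)
      nlinarith
    exact mul_le_one₀ h1 (hNratio0 _) (hNratio1 _)
  have hs_nonneg : ∀ i j, 0 ≤ s i j := by
    intro i j
    apply mul_nonneg (Real.exp_nonneg _)
    linarith [hs_factor i j]
  have hs_le : ∀ i j, s i j ≤ Real.exp (-α * d (i + j)) := by
    intro i j
    have h2 : (1 : ℝ) - Real.exp (-α * (d (i + j + 1) - d (i + j))) * ((N (i + j) : ℝ) / N (i + j + 1)) ≤ 1 := by
      have := mul_nonneg (Real.exp_nonneg (-α * (d (i + j + 1) - d (i + j)))) (hNratio0 (i+j))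
      linarith
    calc s i j ≤ Real.exp (-α * d (i + j)) * 1 :=
          mul_le_mul_of_nonneg_left h2 (Real.exp_nonneg _)
      _ = _ := mul_one _
  have hs_ge : ∀ i j, Real.exp (-α * d (i + j)) - Real.exp (-α * d (i + j + 1)) ≤ s i j := by
    intro i j
    have key : Real.exp (-α * d (i + j)) * Real.exp (-α * (d (i + j + 1) - d (i + j)))
        = Real.exp (-α * d (i + j + 1)) := by
      rw [← Real.exp_add]; ring_nf
    have h1 : Real.exp (-α * (d (i + j + 1) - d (i + j))) * ((N (i + j) : ℝ) / N (i + j + 1))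
        ≤ Real.exp (-α * (d (i + j + 1) - d (i + j))) := by
      calc _ ≤ Real.exp (-α * (d (i + j + 1) - d (i + j))) * 1 :=
            mul_le_mul_of_nonneg_left (hNratio1 _) (Real.exp_nonneg _)
        _ = _ := mul_one _
    have := mul_le_mul_of_nonneg_left h1 (Real.exp_nonneg (-α * d (i + j)))
    simp only [hs_def]
    nlinarith [Real.exp_nonneg (-α * d (i + j))]
  -- exponential bounds on exp(-α d k)
  have hexp_ub : ∀ k : ℕ, 1 ≤ k → Real.exp (-α * d k) ≤
      Real.exp (α * B) * Real.exp (-(α * ξ) * k) := by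
    intro k hk
    rw [← Real.exp_add, Real.exp_le_exp]
    have := hd_lb k hk
    nlinarith
  have hexp_lb : ∀ k : ℕ, 1 ≤ k →
      Real.exp (-(α * B)) * Real.exp (-(α * ξ) * k) ≤ Real.exp (-α * d k) := by
    intro k hk
    rw [← Real.exp_add, Real.exp_le_exp]
    have := hd_ub k hk
    nlinarith
  -- summability
  have hr0 : (0:ℝ) ≤ Real.exp (-(α * ξ)) := Real.exp_nonneg _
  have hr1 : Real.exp (-(α * ξ)) < 1 := Real.exp_lt_one_iff.2 (by linarith)
  have hsum_exp : Summable (fun j : ℕ => Real.exp (-α * d j)) := by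
    rw [← summable_nat_add_iff 1]
    apply Summable.of_nonneg_of_le (fun j => Real.exp_nonneg _)
      (f := fun j : ℕ => Real.exp (α * B) * Real.exp (-(α * ξ)) ^ j)
    · intro j
      have h1 := hexp_ub (j+1) (Nat.le_add_left 1 j)
      have h2 : Real.exp (-(α * ξ) * (j+1:ℕ)) ≤ Real.exp (-(α * ξ)) ^ j := by
        rw [← Real.exp_nat_mul, Real.exp_le_exp]
        push_cast
        nlinarith [Nat.cast_nonneg (α := ℝ) j]
      calc Real.exp (-α * d (j+1)) ≤ Real.exp (α * B) * Real.exp (-(α * ξ) * (j+1:ℕ)) := h1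
        _ ≤ Real.exp (α * B) * Real.exp (-(α * ξ)) ^ j :=
            mul_le_mul_of_nonneg_left h2 (Real.exp_nonneg _)
    · exact (summable_geometric_of_lt_one hr0 hr1).mul_left _
  have hsum_s : ∀ i, Summable (s i) := by
    intro i
    apply Summable.of_nonneg_of_le (hs_nonneg i)
      (f := fun j : ℕ => Real.exp (-α * d (i + j)))
    · exact hs_le i
    · have h := (summable_nat_add_iff (f := fun j : ℕ => Real.exp (-α * d j)) i).2 hsum_exp
      exact h.congr (fun j => by rw [Nat.add_comm])
  have hlam_nonneg : ∀ i, 0 ≤ lam i := by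
    intro i; rw [hlam']; exact tsum_nonneg (hs_nonneg i)
  have hlam_rec : ∀ i, lam i = s i 0 + lam (i+1) := by
    intro i
    rw [hlam' i, hlam' (i+1), Summable.tsum_eq_zero_add (hsum_s i)]
    congr 1
    apply tsum_congr
    intro j
    show s i (j+1) = s (i+1) j
    simp only [hs_def]
    have e1 : i + (j+1) = (i+1) + j := by omega
    rw [e1]
  have hlam_anti : Antitone lam := by
    apply antitone_nat_of_succ_le
    intro n
    rw [hlam_rec n]
    linarith [hs_nonneg n 0]
  -- upper bound for lam
  set K : ℝ := Real.exp (α * B) * (1 - Real.exp (-(α * ξ)))⁻¹ with hK_def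
  have hKpos : 0 < K := mul_pos (Real.exp_pos _) (inv_pos.2 (by linarith))
  have hlam_ub : ∀ i : ℕ, 1 ≤ i → lam i ≤ K * Real.exp (-(α * ξ) * i) := by
    intro i hi
    rw [hlam' i]
    have hbd : ∀ j : ℕ, s i j ≤
        (Real.exp (α * B) * Real.exp (-(α * ξ) * i)) * Real.exp (-(α * ξ)) ^ j := by
      intro j
      have h1 := (hs_le i j).trans (hexp_ub (i + j) (by omega))
      have h2 : Real.exp (-(α * ξ) * (i + j : ℕ)) =
          Real.exp (-(α * ξ) * i) * Real.exp (-(α * ξ)) ^ j := by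
        rw [← Real.exp_nat_mul, ← Real.exp_add]
        congr 1
        push_cast
        ring
      calc s i j ≤ Real.exp (α * B) * Real.exp (-(α * ξ) * (i + j : ℕ)) := h1
        _ = (Real.exp (α * B) * Real.exp (-(α * ξ) * i)) * Real.exp (-(α * ξ)) ^ j := by
            rw [h2]; ring
    have hgeo : Summable (fun j : ℕ => (Real.exp (α * B) * Real.exp (-(α * ξ) * i)) *
        Real.exp (-(α * ξ)) ^ j) := (summable_geometric_of_lt_one hr0 hr1).mul_left _
    calc (∑' j, s i j) ≤ ∑' j : ℕ, (Real.exp (α * B) * Real.exp (-(α * ξ) * i)) *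
          Real.exp (-(α * ξ)) ^ j := Summable.tsum_le_tsum hbd (hsum_s i) hgeo
      _ = (Real.exp (α * B) * Real.exp (-(α * ξ) * i)) * (1 - Real.exp (-(α * ξ)))⁻¹ := by
          rw [tsum_mul_left, tsum_geometric_of_lt_one hr0 hr1]
      _ = K * Real.exp (-(α * ξ) * i) := by rw [hK_def]; ring
  -- lower bound for lam : lam i ≥ exp(-α d i)
  have hlam_lb' : ∀ i : ℕ, Real.exp (-α * d i) ≤ lam i := by
    intro i
    set g : ℕ → ℝ := fun j => Real.exp (-α * d (i + j)) - Real.exp (-α * d (i + j + 1))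
      with hg_def
    have hg_nonneg : ∀ j, 0 ≤ g j := by
      intro j
      have : d (i + j) ≤ d (i + j + 1) := (hdmono (Nat.lt_succ_self _)).le
      have := Real.exp_le_exp.2 (by nlinarith : -α * d (i + j + 1) ≤ -α * d (i + j))
      simp only [hg_def]; linarith
    have hdiv : Tendsto (fun n : ℕ => d (i + n)) atTop atTop := by
      apply tendsto_atTop_mono' _ _ (tendsto_atTop_add_const_right atTop (-B)
        (Tendsto.const_mul_atTop hξ tendsto_natCast_atTop_atTop))
      filter_upwards [eventually_ge_atTop 1] with n hn
      have h1 : ξ * n - B < d n := hd_lb n hn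
      have h2 : d n ≤ d (i + n) := hdmono.monotone (by omega)
      show ξ * n + -B ≤ d (i + n)
      linarith
    have htend : Tendsto (fun n : ℕ => Real.exp (-α * d (i + n))) atTop (nhds 0) := by
      have : Tendsto (fun n : ℕ => -α * d (i + n)) atTop atBot := by
        apply Tendsto.const_mul_atTop_of_neg (by linarith : -α < 0) hdiv
      exact Real.tendsto_exp_atBot.comp this
    have hgsum : HasSum g (Real.exp (-α * d i)) := by
      rw [hasSum_iff_tendsto_nat_of_nonneg hg_nonneg]
      have hps : ∀ n, ∑ j ∈ range n, g j = Real.exp (-α * d i) - Real.exp (-α * d (i + n)) := by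
        intro n
        have := Finset.sum_range_sub' (fun k => Real.exp (-α * d (i + k))) n
        simp only [Nat.add_zero] at this
        rw [← this]
        apply Finset.sum_congr rfl
        intro j _
        rfl
      simp only [hps]
      have : Tendsto (fun n : ℕ => Real.exp (-α * d i) - Real.exp (-α * d (i + n))) atTop
          (nhds (Real.exp (-α * d i) - 0)) := (tendsto_const_nhds).sub htend
      simpa using this
    calc Real.exp (-α * d i) = ∑' j, g j := hgsum.tsum_eq.symm
      _ ≤ ∑' j, s i j := Summable.tsum_le_tsum (hs_ge i) hgsum.summable (hsum_s i)
      _ = lam i := (hlam' i).symm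
  have hlam_lb : ∀ i : ℕ, 1 ≤ i →
      Real.exp (-(α * B)) * Real.exp (-(α * ξ) * i) ≤ lam i := by
    intro i hi
    exact (hexp_lb i hi).trans (hlam_lb' i)
  have hlam_pos : ∀ i : ℕ, 1 ≤ i → 0 < lam i := fun i hi =>
    lt_of_lt_of_le (Real.exp_pos _) (hlam_lb' i)
  -- facts about a
  have hNne : ∀ k, (N k : ℝ) ≠ 0 := fun k => (hNpos k).ne'
  have ha' : ∀ i, a (i + 1) = (N i : ℝ)⁻¹ - (N (i+1) : ℝ)⁻¹ := by
    intro i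
    rw [ha i, mul_sub, mul_one, mul_div_assoc', inv_mul_cancel₀ (hNne i), one_div]
  have ha_nonneg : ∀ i, 0 ≤ a (i + 1) := by
    intro i
    rw [ha' i]
    have : (N i : ℝ) ≤ (N (i+1) : ℝ) := by exact_mod_cast (hNmono (Nat.lt_succ_self i)).le
    have := inv_anti₀ (hNpos i) this
    linarith
  have ha_ub0 : ∀ i, a (i + 1) ≤ (N i : ℝ)⁻¹ := by
    intro i
    rw [ha' i]
    have := inv_pos.2 (hNpos (i+1))
    linarith
  have hNinv_ub : ∀ i : ℕ, 1 ≤ i → (N i : ℝ)⁻¹ ≤ A' * Real.exp (-θ * i) := by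
    intro i hi
    have h := (hNbd i hi).2
    have he : 0 < Real.exp (θ * i) := Real.exp_pos _
    have h2 := mul_le_mul_of_nonneg_right h.le (inv_nonneg.2 he.le)
    rw [mul_assoc, mul_inv_cancel₀ he.ne', mul_one] at h2
    calc (N i : ℝ)⁻¹ ≤ A' * (Real.exp (θ * i))⁻¹ := h2
      _ = A' * Real.exp (-θ * i) := by rw [← Real.exp_neg]; ring_nf
  have hNinv_lb : ∀ i : ℕ, 1 ≤ i → A * Real.exp (-θ * i) ≤ (N i : ℝ)⁻¹ := by
    intro i hi
    have h := (hNbd i hi).1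
    have he : 0 < Real.exp (θ * i) := Real.exp_pos _
    have h2 := mul_le_mul_of_nonneg_right h.le (inv_nonneg.2 he.le)
    rw [mul_assoc, mul_inv_cancel₀ he.ne', mul_one] at h2
    calc A * Real.exp (-θ * i) = A * (Real.exp (θ * i))⁻¹ := by rw [← Real.exp_neg]; ring_nf
      _ ≤ (N i : ℝ)⁻¹ := h2
  -- telescoping sums of a
  have hNcast_tend : ∀ m : ℕ, Tendsto (fun n : ℕ => ((N (m + n) : ℝ))⁻¹) atTop (nhds 0) := by
    intro m
    apply tendsto_inv_atTop_zero.comp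
    apply tendsto_atTop_mono _ tendsto_natCast_atTop_atTop
    intro n
    have : n ≤ N (m + n) := le_trans (Nat.le_add_left n m) hNmono.le_apply
    exact_mod_cast this
  have hasum : ∀ m : ℕ, HasSum (fun i : ℕ => a (i + m + 1)) ((N m : ℝ)⁻¹) := by
    intro m
    have hnn : ∀ i : ℕ, 0 ≤ a (i + m + 1) := fun i => ha_nonneg (i + m)
    rw [hasSum_iff_tendsto_nat_of_nonneg hnn]
    have hps : ∀ n, ∑ i ∈ range n, a (i + m + 1) = (N m : ℝ)⁻¹ - (N (m + n) : ℝ)⁻¹ := by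
      intro n
      have := Finset.sum_range_sub' (fun k => ((N (m + k) : ℝ))⁻¹) n
      simp only [Nat.add_zero] at this
      rw [← this]
      apply Finset.sum_congr rfl
      intro j _
      rw [show j + m = m + j from Nat.add_comm j m, ha' (m + j),
        show m + j + 1 = m + (j + 1) from rfl]
    simp only [hps]
    have : Tendsto (fun n : ℕ => (N m : ℝ)⁻¹ - (N (m + n) : ℝ)⁻¹) atTop
        (nhds ((N m : ℝ)⁻¹ - 0)) := tendsto_const_nhds.sub (hNcast_tend m)
    simpa using this
  have hDbd : ∀ i : ℕ, a (i + 1) ≤ max 1 A' * Real.exp (-θ * i) := by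
    intro i
    rcases Nat.eq_zero_or_pos i with rfl | hi
    · have h1 : a 1 ≤ (N 0 : ℝ)⁻¹ := ha_ub0 0
      rw [hN0] at h1
      simp only [Nat.cast_one, inv_one] at h1
      simp only [Nat.cast_zero, mul_zero, Real.exp_zero, mul_one]
      exact h1.trans (le_max_left 1 A')
    · calc a (i + 1) ≤ (N i : ℝ)⁻¹ := ha_ub0 i
        _ ≤ A' * Real.exp (-θ * i) := hNinv_ub i hi
        _ ≤ max 1 A' * Real.exp (-θ * i) :=
            mul_le_mul_of_nonneg_right (le_max_right 1 A') (Real.exp_nonneg _)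
  -- conjunct 1
  refine ⟨⟨1 + K, ?_⟩, ?_, ?_⟩
  · intro i
    rw [abs_of_nonneg (mul_nonneg (hlam_nonneg i) (Real.exp_nonneg _))]
    rcases Nat.eq_zero_or_pos i with rfl | hi
    · have h1 : lam 0 = s 0 0 + lam 1 := hlam_rec 0
      have h2 : s 0 0 ≤ Real.exp (-α * d 0) := hs_le 0 0
      have h3 : Real.exp (-α * d 0) ≤ 1 :=
        Real.exp_le_one_iff.2 (by nlinarith [hdpos 0])
      have h4 : lam 1 ≤ K * Real.exp (-(α * ξ) * (1:ℕ)) := hlam_ub 1 le_rfl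
      have h5 : Real.exp (-(α * ξ) * (1:ℕ)) ≤ 1 :=
        Real.exp_le_one_iff.2 (by push_cast; nlinarith)
      have h6 : lam 1 ≤ K := by nlinarith
      simp only [Nat.cast_zero, mul_zero, Real.exp_zero, mul_one]
      linarith
    · have h4 := hlam_ub i hi
      have key : K * Real.exp (-(α * ξ) * i) * Real.exp (α * ξ * i) = K := by
        rw [mul_assoc, ← Real.exp_add]
        ring_nf
        rw [Real.exp_zero, mul_one]
      have hcalc : lam i * Real.exp (α * ξ * i) ≤ K := by
        calc lam i * Real.exp (α * ξ * i)
            ≤ K * Real.exp (-(α * ξ) * i) * Real.exp (α * ξ * i) :=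
              mul_le_mul_of_nonneg_right h4 (Real.exp_nonneg _)
          _ = K := key
      linarith
  -- conjunct 2
  · refine ⟨max 1 A' * Real.exp θ, ?_⟩
    intro i
    rw [abs_of_nonneg (mul_nonneg (ha_nonneg i) (Real.exp_nonneg _))]
    have hD : a (i + 1) ≤ max 1 A' * Real.exp (-θ * i) := hDbd i
    calc a (i + 1) * Real.exp (θ * (i + 1))
        ≤ max 1 A' * Real.exp (-θ * i) * Real.exp (θ * (i + 1)) :=
          mul_le_mul_of_nonneg_right hD (Real.exp_nonneg _)
      _ = max 1 A' * Real.exp θ := by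
          rw [mul_assoc, ← Real.exp_add]
          push_cast
          ring_nf
  -- conjunct 3
  · set p : ℕ := ⌈θ / (α * ξ)⌉₊ + 1 with hp_def
    have hβp : θ / (α * ξ) < (p : ℝ) := by
      calc θ / (α * ξ) ≤ (⌈θ / (α * ξ)⌉₊ : ℝ) := Nat.le_ceil _
        _ < (p : ℝ) := by rw [hp_def]; exact_mod_cast Nat.lt_succ_self _
    have hq : 0 < (p:ℝ) * (α * ξ) - θ := by
      have := (div_lt_iff₀ hαξ).1 hβp
      linarith
    set q : ℝ := (p:ℝ) * (α * ξ) - θ with hq_def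
    have hrq : 1 < Real.exp q := by
      rw [show (1:ℝ) = Real.exp 0 from (Real.exp_zero).symm]
      exact Real.exp_lt_exp.2 hq
    set c : ℝ := A * Real.exp (-(K + θ)) with hc_def
    set C1 : ℝ := max 1 A' * (p.factorial : ℝ) *
      Real.exp ((p:ℝ) * (α * B) + (p:ℝ) * (α * ξ) + q) / (Real.exp q - 1) with hC1_def
    have hC1_nonneg : 0 ≤ C1 := by
      apply div_nonneg _ (by linarith)
      have : (0:ℝ) ≤ max 1 A' := le_trans zero_le_one (le_max_left 1 A')
      positivity
    refine ⟨c, max (C1 + A') c, by positivity, le_max_right _ _, Real.exp (α * ξ), ?_⟩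
    intro t ht
    have hT1 : 1 < Real.exp (α * ξ) := by
      rw [show (1:ℝ) = Real.exp 0 from (Real.exp_zero).symm]
      exact Real.exp_lt_exp.2 hαξ
    have ht1 : 1 < t := lt_of_lt_of_le hT1 ht
    have htpos : 0 < t := by linarith
    set x : ℝ := Real.log t / (α * ξ) with hx_def
    have hlogt : α * ξ ≤ Real.log t := by
      have := Real.log_le_log (Real.exp_pos (α * ξ)) ht
      rwa [Real.log_exp] at this
    have hx1 : 1 ≤ x := by
      rw [hx_def, le_div_iff₀ hαξ]
      linarith
    set m : ℕ := ⌈x⌉₊ with hm_def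
    have hm1 : 1 ≤ m := Nat.ceil_pos.2 (by linarith)
    have hmx : x ≤ (m:ℝ) := Nat.le_ceil x
    have hxm : (m:ℝ) ≤ x + 1 := (Nat.ceil_lt_add_one (by linarith)).le
    have htx : Real.exp (α * ξ * x) = t := by
      have hex : α * ξ * x = Real.log t := by
        rw [hx_def]
        field_simp
      rw [hex, Real.exp_log htpos]
    have htβ : t ^ (-(θ / (α * ξ))) = Real.exp (-(θ * x)) := by
      rw [Real.rpow_def_of_pos htpos]
      congr 1
      rw [hx_def]
      field_simp
    -- summability of the series defining f
    have hterm_nonneg : ∀ i : ℕ, 0 ≤ a (i+1) * Real.exp (-(lam (i+1)) * t) :=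
      fun i => mul_nonneg (ha_nonneg i) (Real.exp_nonneg _)
    have hexp_le_one : ∀ i : ℕ, Real.exp (-(lam (i+1)) * t) ≤ 1 := by
      intro i
      exact Real.exp_le_one_iff.2
        (mul_nonpos_of_nonpos_of_nonneg (neg_nonpos.2 (hlam_nonneg (i+1))) htpos.le)
    have hsum_a : Summable (fun i : ℕ => a (i + 1)) := (hasum 0).summable
    have hsum_f : Summable (fun i : ℕ => a (i+1) * Real.exp (-(lam (i+1)) * t)) := by
      apply Summable.of_nonneg_of_le hterm_nonneg _ hsum_a
      intro i
      calc a (i+1) * Real.exp (-(lam (i+1)) * t) ≤ a (i+1) * 1 :=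
            mul_le_mul_of_nonneg_left (hexp_le_one i) (ha_nonneg i)
        _ = a (i+1) := mul_one _
    have hsplit := Summable.sum_add_tsum_nat_add (f := fun i => a (i+1) * Real.exp (-(lam (i+1)) * t))
      m hsum_f
    -- tail bounds
    have hsum_tail : Summable (fun i : ℕ => a (i+m+1) * Real.exp (-(lam (i+m+1)) * t)) :=
      (summable_nat_add_iff m).2 hsum_f
    have hlamm : lam (m+1) * t ≤ K := by
      have h1 : lam (m+1) ≤ K * Real.exp (-(α * ξ) * (m+1:ℕ)) := hlam_ub (m+1) (by omega)
      have h2 : Real.exp (-(α * ξ) * ((m:ℝ)+1)) ≤ t⁻¹ := by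
        rw [← Real.exp_log htpos, ← Real.exp_neg, Real.exp_le_exp]
        have h4 : α * ξ * x ≤ α * ξ * ((m:ℝ)+1) :=
          mul_le_mul_of_nonneg_left (by linarith) hαξ.le
        have hlt : Real.log t = α * ξ * x := by rw [hx_def]; field_simp
        linarith
      push_cast at h1
      have h3 : lam (m+1) ≤ K * t⁻¹ := h1.trans (mul_le_mul_of_nonneg_left h2 hKpos.le)
      calc lam (m+1) * t ≤ K * t⁻¹ * t := mul_le_mul_of_nonneg_right h3 htpos.le
        _ = K := by field_simp
    have htail_lb : Real.exp (-K) * (A * Real.exp (-θ * (m:ℝ))) ≤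
        ∑' i : ℕ, a (i+m+1) * Real.exp (-(lam (i+m+1)) * t) := by
      have hstep : ∀ i : ℕ, a (i+m+1) * Real.exp (-(lam (m+1)) * t) ≤
          a (i+m+1) * Real.exp (-(lam (i+m+1)) * t) := by
        intro i
        apply mul_le_mul_of_nonneg_left _ (ha_nonneg (i+m))
        apply Real.exp_le_exp.2
        have h5 : lam (i+m+1) ≤ lam (m+1) := hlam_anti (by omega)
        have := mul_le_mul_of_nonneg_right h5 htpos.le
        linarith [this]
      have hsl : Summable (fun i : ℕ => a (i+m+1) * Real.exp (-(lam (m+1)) * t)) :=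
        ((hasum m).mul_right _).summable
      have h0 := Summable.tsum_le_tsum hstep hsl hsum_tail
      have heq : (∑' i : ℕ, a (i+m+1) * Real.exp (-(lam (m+1)) * t)) =
          (N m : ℝ)⁻¹ * Real.exp (-(lam (m+1)) * t) := ((hasum m).mul_right _).tsum_eq
      have hK2 : Real.exp (-K) ≤ Real.exp (-(lam (m+1)) * t) := by
        apply Real.exp_le_exp.2
        rw [neg_mul]
        linarith
      have hNm := hNinv_lb m hm1
      calc Real.exp (-K) * (A * Real.exp (-θ * (m:ℝ)))
          ≤ Real.exp (-(lam (m+1)) * t) * (N m : ℝ)⁻¹ := by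
            apply mul_le_mul hK2 hNm (by positivity) (Real.exp_nonneg _)
        _ = (∑' i : ℕ, a (i+m+1) * Real.exp (-(lam (m+1)) * t)) := by rw [heq]; ring
        _ ≤ _ := h0
    have htail_ub : (∑' i : ℕ, a (i+m+1) * Real.exp (-(lam (i+m+1)) * t)) ≤
        A' * Real.exp (-θ * (m:ℝ)) := by
      have hstep : ∀ i : ℕ, a (i+m+1) * Real.exp (-(lam (i+m+1)) * t) ≤ a (i+m+1) := by
        intro i
        have h1 : Real.exp (-(lam (i+m+1)) * t) ≤ 1 := Real.exp_le_one_iff.2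
          (mul_nonpos_of_nonpos_of_nonneg (neg_nonpos.2 (hlam_nonneg (i+m+1))) htpos.le)
        calc a (i+m+1) * Real.exp (-(lam (i+m+1)) * t) ≤ a (i+m+1) * 1 :=
              mul_le_mul_of_nonneg_left h1 (ha_nonneg (i+m))
          _ = _ := mul_one _
      have h0 := Summable.tsum_le_tsum hstep hsum_tail (hasum m).summable
      rw [(hasum m).tsum_eq] at h0
      exact h0.trans (hNinv_ub m hm1)
    -- head bounds
    have hhead_nonneg : 0 ≤ ∑ i ∈ range m, a (i+1) * Real.exp (-(lam (i+1)) * t) :=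
      Finset.sum_nonneg fun i _ => hterm_nonneg i
    set Dp : ℝ := max 1 A' * (p.factorial : ℝ) *
        Real.exp ((p:ℝ)*(α*B) + (p:ℝ)*(α*ξ) - (p:ℝ)*(α*ξ)*x) with hDp_def
    have hDp_nonneg : 0 ≤ Dp := by
      have h1 : (0:ℝ) ≤ max 1 A' := le_trans zero_le_one (le_max_left 1 A')
      positivity
    have hterm : ∀ i : ℕ, a (i+1) * Real.exp (-(lam (i+1)) * t) ≤ Dp * Real.exp q ^ i := by
      intro i
      set u : ℝ := -(α*B) - (α*ξ)*((i:ℝ)+1) + (α*ξ)*x with hu_def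
      have hu : Real.exp u ≤ lam (i+1) * t := by
        have h1 := hlam_lb (i+1) (by omega)
        push_cast at h1
        calc Real.exp u
            = (Real.exp (-(α*B)) * Real.exp (-(α*ξ)*((i:ℝ)+1))) * Real.exp (α*ξ*x) := by
              rw [← Real.exp_add, ← Real.exp_add, hu_def]
              ring_nf
          _ ≤ lam (i+1) * t := by
              rw [htx]
              exact mul_le_mul_of_nonneg_right h1 htpos.le
      set L : ℝ := lam (i+1) * t with hL_def
      have hLpos : 0 < L := mul_pos (hlam_pos (i+1) (by omega)) htpos
      have hfp : (0:ℝ) < (p.factorial : ℝ) := by exact_mod_cast p.factorial_pos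
      have hpow : L ^ p ≤ (p.factorial : ℝ) * Real.exp L := by
        have hsum2 := Real.sum_le_exp_of_nonneg hLpos.le (p+1)
        have hmem : L ^ p / (p.factorial : ℝ) ≤
            ∑ k ∈ range (p+1), L ^ k / (k.factorial : ℝ) :=
          Finset.single_le_sum (f := fun k => L ^ k / (k.factorial : ℝ))
            (fun k _ => by positivity) (self_mem_range_succ p)
        have h5 : L ^ p / (p.factorial : ℝ) ≤ Real.exp L := hmem.trans hsum2
        calc L ^ p = L ^ p / (p.factorial : ℝ) * (p.factorial : ℝ) := by field_simp
          _ ≤ Real.exp L * (p.factorial : ℝ) := mul_le_mul_of_nonneg_right h5 hfp.le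
          _ = (p.factorial : ℝ) * Real.exp L := mul_comm _ _
      have h1 : Real.exp ((p:ℝ) * u) ≤ L ^ p := by
        rw [Real.exp_nat_mul]
        exact pow_le_pow_left₀ (Real.exp_nonneg u) hu p
      have h3 : Real.exp (-L) * Real.exp ((p:ℝ)*u) ≤ (p.factorial : ℝ) := by
        calc Real.exp (-L) * Real.exp ((p:ℝ)*u)
            ≤ Real.exp (-L) * L ^ p := mul_le_mul_of_nonneg_left h1 (Real.exp_nonneg _)
          _ ≤ Real.exp (-L) * ((p.factorial : ℝ) * Real.exp L) :=
              mul_le_mul_of_nonneg_left hpow (Real.exp_nonneg _)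
          _ = (p.factorial : ℝ) * (Real.exp (-L) * Real.exp L) := by ring
          _ = (p.factorial : ℝ) := by rw [← Real.exp_add]; simp
      have hexpL : Real.exp (-L) ≤ (p.factorial : ℝ) * Real.exp (-((p:ℝ)*u)) := by
        calc Real.exp (-L)
            = (Real.exp (-L) * Real.exp ((p:ℝ)*u)) * Real.exp (-((p:ℝ)*u)) := by
              rw [mul_assoc, ← Real.exp_add]
              simp
          _ ≤ (p.factorial : ℝ) * Real.exp (-((p:ℝ)*u)) :=
              mul_le_mul_of_nonneg_right h3 (Real.exp_nonneg _)
      have hml : Real.exp (-(lam (i+1)) * t) = Real.exp (-L) := by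
        rw [hL_def, neg_mul]
      have hfinal : a (i+1) * Real.exp (-(lam (i+1)) * t) ≤
          max 1 A' * Real.exp (-θ * i) * ((p.factorial:ℝ) * Real.exp (-((p:ℝ)*u))) := by
        rw [hml]
        apply mul_le_mul (hDbd i) hexpL (Real.exp_nonneg _)
        have h6 : (0:ℝ) ≤ max 1 A' := le_trans zero_le_one (le_max_left 1 A')
        positivity
      have e1 : Real.exp (-θ * i) * Real.exp (-((p:ℝ)*u)) =
          Real.exp ((p:ℝ)*(α*B) + (p:ℝ)*(α*ξ) - (p:ℝ)*(α*ξ)*x) * Real.exp (q * i) := by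
        rw [← Real.exp_add, ← Real.exp_add]
        congr 1
        rw [hu_def, hq_def]
        ring
      have e2 : Real.exp (q * (i:ℝ)) = Real.exp q ^ i := by
        rw [mul_comm, Real.exp_nat_mul]
      calc a (i+1) * Real.exp (-(lam (i+1)) * t)
          ≤ max 1 A' * Real.exp (-θ * i) * ((p.factorial:ℝ) * Real.exp (-((p:ℝ)*u))) := hfinal
        _ = (max 1 A' * (p.factorial:ℝ)) * (Real.exp (-θ * i) * Real.exp (-((p:ℝ)*u))) := by
            ring
        _ = (max 1 A' * (p.factorial:ℝ)) *
            (Real.exp ((p:ℝ)*(α*B) + (p:ℝ)*(α*ξ) - (p:ℝ)*(α*ξ)*x) * Real.exp (q * i)) := by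
            rw [e1]
        _ = Dp * Real.exp q ^ i := by rw [hDp_def, e2]; ring
    have hden : 0 < Real.exp q - 1 := by linarith
    have hgeom : (∑ i ∈ range m, Real.exp q ^ i) ≤ Real.exp q ^ m / (Real.exp q - 1) := by
      rw [geom_sum_eq (ne_of_gt hrq) m]
      exact (div_le_div_iff_of_pos_right hden).2 (by linarith)
    have hhead_ub : (∑ i ∈ range m, a (i+1) * Real.exp (-(lam (i+1)) * t)) ≤
        C1 * Real.exp (-(θ * x)) := by
      have hqm : Real.exp q ^ m ≤ Real.exp (q * x + q) := by
        rw [← Real.exp_nat_mul, Real.exp_le_exp]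
        nlinarith [mul_le_mul_of_nonneg_left hxm hq.le]
      have e3 : Dp * Real.exp (q * x + q) =
          (max 1 A' * (p.factorial:ℝ) * Real.exp ((p:ℝ)*(α*B) + (p:ℝ)*(α*ξ) + q)) *
            Real.exp (-(θ * x)) := by
        rw [hDp_def]
        calc max 1 A' * (p.factorial:ℝ) *
              Real.exp ((p:ℝ)*(α*B) + (p:ℝ)*(α*ξ) - (p:ℝ)*(α*ξ)*x) * Real.exp (q * x + q)
            = max 1 A' * (p.factorial:ℝ) *
              (Real.exp ((p:ℝ)*(α*B) + (p:ℝ)*(α*ξ) - (p:ℝ)*(α*ξ)*x) * Real.exp (q * x + q)) := by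
              ring
          _ = max 1 A' * (p.factorial:ℝ) *
              (Real.exp ((p:ℝ)*(α*B) + (p:ℝ)*(α*ξ) + q) * Real.exp (-(θ * x))) := by
              rw [← Real.exp_add, ← Real.exp_add]
              congr 2
              rw [hq_def]
              ring
          _ = _ := by ring
      calc (∑ i ∈ range m, a (i+1) * Real.exp (-(lam (i+1)) * t))
          ≤ ∑ i ∈ range m, Dp * Real.exp q ^ i := Finset.sum_le_sum fun i _ => hterm i
        _ = Dp * ∑ i ∈ range m, Real.exp q ^ i := by rw [Finset.mul_sum]
        _ ≤ Dp * (Real.exp q ^ m / (Real.exp q - 1)) :=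
            mul_le_mul_of_nonneg_left hgeom hDp_nonneg
        _ ≤ Dp * (Real.exp (q * x + q) / (Real.exp q - 1)) := by
            apply mul_le_mul_of_nonneg_left _ hDp_nonneg
            exact (div_le_div_iff_of_pos_right hden).2 hqm
        _ = Dp * Real.exp (q * x + q) / (Real.exp q - 1) := by ring
        _ = C1 * Real.exp (-(θ * x)) := by
            rw [e3, hC1_def]
            ring
    -- final assembly
    rw [← hsplit]
    have hmexp : Real.exp (-(θ * x)) * Real.exp (-θ) ≤ Real.exp (-θ * (m:ℝ)) := by
      rw [← Real.exp_add, Real.exp_le_exp]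
      nlinarith [mul_le_mul_of_nonneg_left hxm hθ.le]
    have hmexp2 : Real.exp (-θ * (m:ℝ)) ≤ Real.exp (-(θ * x)) := by
      rw [Real.exp_le_exp]
      nlinarith [mul_le_mul_of_nonneg_left hmx hθ.le]
    constructor
    · -- lower bound
      have e4' : Real.exp (-(K + θ)) * Real.exp (-(θ * x)) =
          Real.exp (-K) * (Real.exp (-(θ * x)) * Real.exp (-θ)) := by
        rw [← Real.exp_add, ← Real.exp_add, ← Real.exp_add]
        congr 1
        ring
      have e4 : c * t ^ (-(θ / (α * ξ))) =
          Real.exp (-K) * (A * (Real.exp (-(θ * x)) * Real.exp (-θ))) := by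
        rw [htβ, hc_def, mul_assoc, e4']
        ring
      calc c * t ^ (-(θ / (α * ξ)))
          = Real.exp (-K) * (A * (Real.exp (-(θ * x)) * Real.exp (-θ))) := e4
        _ ≤ Real.exp (-K) * (A * Real.exp (-θ * (m:ℝ))) := by
            apply mul_le_mul_of_nonneg_left _ (Real.exp_nonneg _)
            exact mul_le_mul_of_nonneg_left hmexp hA.le
        _ ≤ ∑' i : ℕ, a (i+m+1) * Real.exp (-(lam (i+m+1)) * t) := htail_lb
        _ ≤ _ := by linarith [hhead_nonneg]
    · -- upper bound
      calc (∑ i ∈ range m, a (i+1) * Real.exp (-(lam (i+1)) * t)) +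
            ∑' i : ℕ, a (i+m+1) * Real.exp (-(lam (i+m+1)) * t)
          ≤ C1 * Real.exp (-(θ * x)) + A' * Real.exp (-θ * (m:ℝ)) :=
            add_le_add hhead_ub htail_ub
        _ ≤ C1 * Real.exp (-(θ * x)) + A' * Real.exp (-(θ * x)) := by
            have := mul_le_mul_of_nonneg_left hmexp2 hA'.le
            linarith
        _ = (C1 + A') * Real.exp (-(θ * x)) := by ring
        _ ≤ max (C1 + A') c * Real.exp (-(θ * x)) :=
            mul_le_mul_of_nonneg_right (le_max_left _ _) (Real.exp_nonneg _)
        _ = max (C1 + A') c * t ^ (-(θ / (α * ξ))) := by rw [htβ]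
end

section
/- Let (λ_i)_{i≥1} be a strictly decreasing positive sequence with λ_i → 0 and (a_i)_{i≥1} a positive summable sequence, and let k > 0. Define J(s) = ∑_{i=1}^∞ a_i/(s + λ_i) for real s not equal to any -λ_i. Then the equation 1 + k J(s) = 0 has exactly one solution s = -ν_j in each interval (-λ_{j-1}, -λ_j) for j > 1 and exactly one solution s = -ν_1 in (-∞, -λ_1); in particular λ_1 < ν_1 and λ_j < ν_j < λ_{j-1} for j > 1. -/
open Filter

open Set Topology

/-! On an open interval `U` free of the poles `-lam i`, each term `a i / (s + lam i)` is strictly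
decreasing, and the series converges locally uniformly because every point of `U` keeps a positive
distance from all poles; hence `J = poleSum a lam` is continuous and strictly decreasing on `U`.
Comparing every term with its value at a fixed point of `U` shows that near a pole bounding `U`
the single term carrying that pole dominates, so `J → +∞` at the left end of a gap and
`J → -∞` at its right end, while `J → 0` at `-∞` by dominated convergence. The intermediate
value theorem and strict monotonicity then give exactly one root of `1 + k J` on each gap. -/

noncomputable def poleSum (a lam : ℕ → ℝ) (s : ℝ) : ℝ := ∑' i, a i / (s + lam i)

lemma div_lt_div_of_lt_of_mul_pos {c x y : ℝ} (hc : 0 < c) (hxy : x < y) (hpos : 0 < x * y) :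
    c / y < c / x := by
  have hx : x ≠ 0 := by rintro rfl; simp at hpos
  have hy : y ≠ 0 := by rintro rfl; simp at hpos
  have hdiff : c / y - c / x = c * (x - y) / (x * y) := by field_simp
  have : c * (x - y) / (x * y) < 0 :=
    div_neg_of_neg_of_pos (mul_neg_of_pos_of_neg hc (by linarith)) hpos
  linarith

lemma sub_add_tsum_le_tsum {ι : Type*} {f g : ι → ℝ} (hf : Summable f) (hg : Summable g)
    (hgf : ∀ i, g i ≤ f i) (j : ι) : f j - g j + ∑' i, g i ≤ ∑' i, f i := by
  have := (hf.sub hg).le_tsum j fun i _ => sub_nonneg.2 (hgf i)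
  rw [hf.tsum_sub hg] at this
  linarith

lemma existsUnique_eq_zero_of_strictAntiOn {f : ℝ → ℝ} {U : Set ℝ} (hU : IsPreconnected U)
    (hf : ContinuousOn f U) (hanti : StrictAntiOn f U) (hpos : ∃ x ∈ U, 0 < f x)
    (hneg : ∃ y ∈ U, f y < 0) : ∃! x, x ∈ U ∧ f x = 0 := by
  obtain ⟨x, hx, hfx⟩ := hpos
  obtain ⟨y, hy, hfy⟩ := hneg
  obtain ⟨z, hz, hfz⟩ := hU.intermediate_value hy hx hf ⟨hfy.le, hfx.le⟩
  exact ⟨z, ⟨hz, hfz⟩, fun w hw => hanti.injOn hw.1 hz (hw.2.trans hfz.symm)⟩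

section PoleSum

variable {a lam : ℕ → ℝ} {U : Set ℝ}

lemma le_abs_add_of_ball_subset {s r : ℝ} (hball : Metric.ball s r ⊆ U)
    (hpole : ∀ i, -lam i ∉ U) (i : ℕ) : r ≤ |s + lam i| := by
  by_contra! h
  refine hpole i (hball ?_)
  rwa [Metric.mem_ball, Real.dist_eq, ← abs_neg, neg_sub, sub_neg_eq_add]

lemma abs_div_add_le {s r : ℝ} (hr : 0 < r) (h : ∀ i, r ≤ |s + lam i|) (i : ℕ) :
    |a i / (s + lam i)| ≤ |a i| / r := by
  rw [abs_div]
  exact div_le_div_of_nonneg_left (abs_nonneg _) hr (h i)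

lemma summable_div_add_of_mem (ha : Summable a) (hUo : IsOpen U) (hpole : ∀ i, -lam i ∉ U)
    {s : ℝ} (hs : s ∈ U) : Summable fun i => a i / (s + lam i) := by
  obtain ⟨r, hr, hball⟩ := Metric.isOpen_iff.1 hUo s hs
  refine .of_norm_bounded ((summable_abs_iff.2 ha).div_const r) fun i => ?_
  exact abs_div_add_le hr (le_abs_add_of_ball_subset hball hpole) i

lemma continuousOn_poleSum (ha : Summable a) (hUo : IsOpen U) (hpole : ∀ i, -lam i ∉ U) :
    ContinuousOn (poleSum a lam) U := by
  refine (hUo.continuousOn_iff).2 fun s hs => ?_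
  obtain ⟨r, hr, hball⟩ := Metric.isOpen_iff.1 hUo s hs
  have hbound : ∀ t ∈ Metric.ball s (r / 2), ∀ i, r / 2 ≤ |t + lam i| := fun t ht =>
    le_abs_add_of_ball_subset ((Metric.ball_subset_ball' (by linarith [Metric.mem_ball.1 ht])).trans
      hball) hpole
  have hcont : ContinuousOn (poleSum a lam) (Metric.ball s (r / 2)) := by
    refine continuousOn_tsum (fun i => ?_) ((summable_abs_iff.2 ha).div_const (r / 2))
      fun i t ht => abs_div_add_le (half_pos hr) (hbound t ht) i
    refine continuousOn_const.div (continuousOn_id.add continuousOn_const) fun t ht h0 => ?_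
    have := hbound t ht i
    rw [h0, abs_zero] at this
    linarith
  exact hcont.continuousAt (Metric.ball_mem_nhds s (half_pos hr))

lemma mul_pos_of_ordConnected (hUc : U.OrdConnected) {l : ℝ} (hpole : -l ∉ U) {u v : ℝ}
    (hu : u ∈ U) (hv : v ∈ U) (huv : u ≤ v) : 0 < (u + l) * (v + l) := by
  have hu0 : u + l ≠ 0 := fun h => hpole (by rwa [← eq_neg_of_add_eq_zero_left h])
  have hv0 : v + l ≠ 0 := fun h => hpole (by rwa [← eq_neg_of_add_eq_zero_left h])
  rcases hu0.lt_or_gt with hu' | hu'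
  · rcases hv0.lt_or_gt with hv' | hv'
    · exact mul_pos_of_neg_of_neg hu' hv'
    · exact absurd (hUc.out hu hv ⟨by linarith, by linarith⟩) hpole
  · exact mul_pos hu' (by linarith)

lemma strictAntiOn_div_add (hUc : U.OrdConnected) {c l : ℝ} (hc : 0 < c) (hpole : -l ∉ U) :
    StrictAntiOn (fun s => c / (s + l)) U := fun _ hu _ hv huv =>
  div_lt_div_of_lt_of_mul_pos hc (by linarith) (mul_pos_of_ordConnected hUc hpole hu hv huv.le)

lemma strictAntiOn_poleSum (ha : ∀ i, 0 < a i) (hsum : Summable a) (hUo : IsOpen U)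
    (hUc : U.OrdConnected) (hpole : ∀ i, -lam i ∉ U) : StrictAntiOn (poleSum a lam) U :=
  fun _ hu _ hv huv => Summable.tsum_lt_tsum (i := 0)
    (fun i => (strictAntiOn_div_add hUc (ha i) (hpole i)).antitoneOn hu hv huv.le)
    (strictAntiOn_div_add hUc (ha 0) (hpole 0) hu hv huv)
    (summable_div_add_of_mem hsum hUo hpole hv) (summable_div_add_of_mem hsum hUo hpole hu)

lemma poleSum_ge_of_le (ha : ∀ i, 0 < a i) (hsum : Summable a) (hUo : IsOpen U)
    (hUc : U.OrdConnected) (hpole : ∀ i, -lam i ∉ U) {s c : ℝ} (hs : s ∈ U) (hc : c ∈ U)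
    (hsc : s ≤ c) (j : ℕ) :
    a j / (s + lam j) - a j / (c + lam j) + poleSum a lam c ≤ poleSum a lam s :=
  sub_add_tsum_le_tsum (summable_div_add_of_mem hsum hUo hpole hs)
    (summable_div_add_of_mem hsum hUo hpole hc)
    (fun i => (strictAntiOn_div_add hUc (ha i) (hpole i)).antitoneOn hs hc hsc) j

lemma poleSum_le_of_le (ha : ∀ i, 0 < a i) (hsum : Summable a) (hUo : IsOpen U)
    (hUc : U.OrdConnected) (hpole : ∀ i, -lam i ∉ U) {s c : ℝ} (hs : s ∈ U) (hc : c ∈ U)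
    (hcs : c ≤ s) (j : ℕ) :
    poleSum a lam s ≤ a j / (s + lam j) - a j / (c + lam j) + poleSum a lam c := by
  have := poleSum_ge_of_le ha hsum hUo hUc hpole hc hs hcs j
  linarith

lemma tendsto_div_add_nhdsGT {c l : ℝ} (hc : 0 < c) :
    Tendsto (fun s => c / (s + l)) (𝓝[>] (-l)) atTop := by
  have hshift : Tendsto (· + l) (𝓝[>] (-l)) (𝓝[>] 0) := by
    have := (map_add_right_nhdsGT (c := l) (a := -l)).le
    rwa [neg_add_cancel] at this
  simpa only [div_eq_mul_inv, Function.comp_def] using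
    (tendsto_inv_nhdsGT_zero.comp hshift).const_mul_atTop hc

lemma tendsto_div_add_nhdsLT {c l : ℝ} (hc : 0 < c) :
    Tendsto (fun s => c / (s + l)) (𝓝[<] (-l)) atBot := by
  have hshift : Tendsto (· + l) (𝓝[<] (-l)) (𝓝[<] 0) := by
    have := (map_add_right_nhdsLT (c := l) (a := -l)).le
    rwa [neg_add_cancel] at this
  simpa only [div_eq_mul_inv, Function.comp_def] using
    (tendsto_inv_nhdsLT_zero.comp hshift).const_mul_atBot hc

lemma tendsto_poleSum_nhdsGT (ha : ∀ i, 0 < a i) (hsum : Summable a) (hUo : IsOpen U)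
    (hUc : U.OrdConnected) (hpole : ∀ i, -lam i ∉ U) {j : ℕ} (hU : U ∈ 𝓝[>] (-lam j)) :
    Tendsto (poleSum a lam) (𝓝[>] (-lam j)) atTop := by
  obtain ⟨c, hcU, hjc⟩ := (Eventually.and hU self_mem_nhdsWithin).exists
  have hlow : ∀ᶠ s in 𝓝[>] (-lam j),
      a j / (s + lam j) + (poleSum a lam c - a j / (c + lam j)) ≤ poleSum a lam s := by
    filter_upwards [hU, mem_nhdsWithin_of_mem_nhds (Iio_mem_nhds hjc)] with s hs hsc
    linarith [poleSum_ge_of_le ha hsum hUo hUc hpole hs hcU (le_of_lt hsc) j]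
  exact tendsto_atTop_mono' _ hlow
    (tendsto_atTop_add_const_right _ _ (tendsto_div_add_nhdsGT (ha j)))

lemma tendsto_poleSum_nhdsLT (ha : ∀ i, 0 < a i) (hsum : Summable a) (hUo : IsOpen U)
    (hUc : U.OrdConnected) (hpole : ∀ i, -lam i ∉ U) {j : ℕ} (hU : U ∈ 𝓝[<] (-lam j)) :
    Tendsto (poleSum a lam) (𝓝[<] (-lam j)) atBot := by
  obtain ⟨c, hcU, hcj⟩ := (Eventually.and hU self_mem_nhdsWithin).exists
  have hup : ∀ᶠ s in 𝓝[<] (-lam j),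
      poleSum a lam s ≤ a j / (s + lam j) + (poleSum a lam c - a j / (c + lam j)) := by
    filter_upwards [hU, mem_nhdsWithin_of_mem_nhds (Ioi_mem_nhds hcj)] with s hs hcs
    linarith [poleSum_le_of_le ha hsum hUo hUc hpole hs hcU (le_of_lt hcs) j]
  exact tendsto_atBot_mono' _ hup
    (tendsto_atBot_add_const_right _ _ (tendsto_div_add_nhdsLT (ha j)))

lemma tendsto_poleSum_atBot (ha : Summable a) (hlam : BddAbove (range lam)) :
    Tendsto (poleSum a lam) atBot (𝓝 0) := by
  obtain ⟨M, hM⟩ := hlam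
  have hbound : ∀ᶠ s in atBot, ∀ i, ‖a i / (s + lam i)‖ ≤ |a i| := by
    filter_upwards [Iic_mem_atBot (-M - 1)] with s hs i
    have hfar : ∀ i, 1 ≤ |s + lam i| := fun i =>
      le_abs.2 (Or.inr (by linarith [hM ⟨i, rfl⟩, mem_Iic.1 hs]))
    simpa only [Real.norm_eq_abs, div_one] using abs_div_add_le (a := a) one_pos hfar i
  have := tendsto_tsum_of_dominated_convergence (summable_abs_iff.2 ha)
    (fun i => tendsto_const_nhds.div_atBot (tendsto_atBot_add_const_right _ (lam i) tendsto_id))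
    hbound
  rwa [tsum_zero] at this

lemma existsUnique_one_add_mul_poleSum_eq_zero (ha : ∀ i, 0 < a i) (hsum : Summable a) {k : ℝ}
    (hk : 0 < k) (hUo : IsOpen U) (hUc : U.OrdConnected) (hpole : ∀ i, -lam i ∉ U)
    (hpos : ∃ x ∈ U, 0 < 1 + k * poleSum a lam x)
    (hneg : ∃ y ∈ U, 1 + k * poleSum a lam y < 0) :
    ∃! s, s ∈ U ∧ 1 + k * poleSum a lam s = 0 :=
  existsUnique_eq_zero_of_strictAntiOn hUc.isPreconnected
    (continuousOn_const.add (continuousOn_const.mul (continuousOn_poleSum hsum hUo hpole)))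
    (fun _ hu _ hv huv => add_lt_add_right
      (mul_lt_mul_of_pos_left (strictAntiOn_poleSum ha hsum hUo hUc hpole hu hv huv) hk) 1)
    hpos hneg

lemma neg_notMem_Ioo_of_antitone (hlam : Antitone lam) (j i : ℕ) :
    -lam i ∉ Ioo (-lam j) (-lam (j + 1)) := by
  rintro ⟨hj, hj'⟩
  rcases le_or_gt i j with h | h
  · linarith [hlam h]
  · linarith [hlam (show j + 1 ≤ i from h)]

lemma neg_notMem_Iio_of_antitone (hlam : Antitone lam) (i : ℕ) : -lam i ∉ Iio (-lam 0) :=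
  fun h => by linarith [hlam i.zero_le, mem_Iio.1 h]

lemma existsUnique_one_add_mul_poleSum_eq_zero_Iio (hlam : StrictAnti lam) (ha : ∀ i, 0 < a i)
    (hsum : Summable a) {k : ℝ} (hk : 0 < k) :
    ∃! s, s ∈ Iio (-lam 0) ∧ 1 + k * poleSum a lam s = 0 := by
  have hpole := neg_notMem_Iio_of_antitone hlam.antitone
  refine existsUnique_one_add_mul_poleSum_eq_zero ha hsum hk isOpen_Iio ordConnected_Iio hpole
    ?_ ?_
  · have hbdd : BddAbove (range lam) :=
      ⟨lam 0, by rintro _ ⟨i, rfl⟩; exact hlam.antitone i.zero_le⟩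
    have hlim : Tendsto (fun s => 1 + k * poleSum a lam s) atBot (𝓝 1) := by
      simpa using (tendsto_poleSum_atBot hsum hbdd).const_mul k |>.const_add 1
    exact (Eventually.and (Iio_mem_atBot _) (hlim.eventually_const_lt one_pos)).exists
  · have hU : Iio (-lam 0) ∈ 𝓝[<] (-lam 0) := self_mem_nhdsWithin
    have hlim := tendsto_atBot_add_const_left _ 1 <|
      (tendsto_poleSum_nhdsLT ha hsum isOpen_Iio ordConnected_Iio hpole hU).const_mul_atBot hk
    exact (Eventually.and hU (hlim.eventually_lt_atBot 0)).exists

lemma existsUnique_one_add_mul_poleSum_eq_zero_Ioo (hlam : StrictAnti lam) (ha : ∀ i, 0 < a i)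
    (hsum : Summable a) {k : ℝ} (hk : 0 < k) (j : ℕ) :
    ∃! s, s ∈ Ioo (-lam j) (-lam (j + 1)) ∧ 1 + k * poleSum a lam s = 0 := by
  have hlt : -lam j < -lam (j + 1) := neg_lt_neg (hlam j.lt_succ_self)
  have hpole := neg_notMem_Ioo_of_antitone hlam.antitone j
  refine existsUnique_one_add_mul_poleSum_eq_zero ha hsum hk isOpen_Ioo ordConnected_Ioo hpole
    ?_ ?_
  · have hlim := tendsto_atTop_add_const_left _ 1 <|
      (tendsto_poleSum_nhdsGT ha hsum isOpen_Ioo ordConnected_Ioo hpole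
        (Ioo_mem_nhdsGT hlt)).const_mul_atTop hk
    exact (Eventually.and (Ioo_mem_nhdsGT hlt) (hlim.eventually_gt_atTop 0)).exists
  · have hlim := tendsto_atBot_add_const_left _ 1 <|
      (tendsto_poleSum_nhdsLT ha hsum isOpen_Ioo ordConnected_Ioo hpole
        (Ioo_mem_nhdsLT hlt)).const_mul_atBot hk
    exact (Eventually.and (Ioo_mem_nhdsLT hlt) (hlim.eventually_lt_atBot 0)).exists

end PoleSum

theorem stmt12_general (lam : ℕ → ℝ) (hanti : StrictAnti lam)
    (a : ℕ → ℝ) (hapos : ∀ i, 0 < a i) (hasum : Summable a)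
    (k : ℝ) (hk : 0 < k) :
    (∃! s : ℝ, s ∈ Set.Iio (-(lam 0)) ∧ 1 + k * (∑' i, a i / (s + lam i)) = 0) ∧
    ∀ j : ℕ, ∃! s : ℝ, s ∈ Set.Ioo (-(lam j)) (-(lam (j + 1))) ∧
      1 + k * (∑' i, a i / (s + lam i)) = 0 :=
  ⟨existsUnique_one_add_mul_poleSum_eq_zero_Iio hanti hapos hasum hk,
    existsUnique_one_add_mul_poleSum_eq_zero_Ioo hanti hapos hasum hk⟩

theorem stmt12 (lam : ℕ → ℝ) (hpos : ∀ i, 0 < lam i) (hanti : StrictAnti lam)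
    (hlim : Tendsto lam atTop (nhds 0))
    (a : ℕ → ℝ) (hapos : ∀ i, 0 < a i) (hasum : Summable a)
    (k : ℝ) (hk : 0 < k) :
    (∃! s : ℝ, s ∈ Set.Iio (-(lam 0)) ∧ 1 + k * (∑' i, a i / (s + lam i)) = 0) ∧
    ∀ j : ℕ, ∃! s : ℝ, s ∈ Set.Ioo (-(lam j)) (-(lam (j + 1))) ∧
      1 + k * (∑' i, a i / (s + lam i)) = 0 :=
  stmt12_general lam hanti a hapos hasum k hk
end

section
/- Let U be a countable ultrametric space, x₀ ∈ U, with the spherically symmetric setup (balls B_i, sizes N_i, indicators J_i, wavelets φ_i, eigenvalues λ_i as in the ultrametric diffusion problem). Then for all indices i, j, k ≥ 1, ∑_{x∈U} φ_i(x) φ_j(x) φ_k(x) equals δ_{ij}δ_{jk} N_{k-1}^{-1/2}(1 - N_{k-1}/N_k)^{-3/2}(1 - 3N_{k-1}/N_k + 2N_{k-1}²/N_k²) when i=j=k; equals [i=j, i<k]·N_{k-1}^{-1/2}(1-N_{k-1}/N_k)^{1/2} + [i=k, i<j]·N_{j-1}^{-1/2}(1-N_{j-1}/N_j)^{1/2}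 + [j=k, j<i]·N_{i-1}^{-1/2}(1-N_{i-1}/N_i)^{1/2} when exactly two indices are equal and strictly less than the third; and equals 0 otherwise. -/
private lemma alg_sq {a b : ℝ} (ha : 0 < a) (hab : a < b) :
    a * ((a * (1 - a/b)) ^ (-(1/2):ℝ) * (1 - a/b))^2
      + (b - a) * (-((a * (1 - a/b)) ^ (-(1/2):ℝ) * (a/b)))^2 = 1 := by
  have hb : 0 < b := ha.trans hab
  have hr : 0 < 1 - a/b := by
    have := (div_lt_one hb).mpr hab; linarith
  have hX : 0 < a * (1 - a/b) := by positivity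
  set c : ℝ := (a * (1 - a/b)) ^ (-(1/2):ℝ) with hc
  have hc2 : c^2 = (a * (1 - a/b))⁻¹ := by
    rw [hc, ← Real.rpow_natCast ((a * (1 - a/b)) ^ (-(1/2):ℝ)) 2,
      ← Real.rpow_mul hX.le]
    norm_num
    rw [Real.rpow_neg_one, mul_inv]
    ring
  calc a * (c * (1 - a/b))^2 + (b - a) * (-(c * (a/b)))^2
      = c^2 * (a * (1 - a/b)^2 + (b - a) * (a/b)^2) := by ring
    _ = (a * (1 - a/b))⁻¹ * (a * (1 - a/b)) := by
        rw [hc2]; congr 1; field_simp; ring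
    _ = 1 := inv_mul_cancel₀ hX.ne'

private lemma alg_id {a b : ℝ} (ha : 0 < a) (hab : a < b) :
    a * ((a * (1 - a/b)) ^ (-(1/2):ℝ) * (1 - a/b))
      + (b - a) * (-((a * (1 - a/b)) ^ (-(1/2):ℝ) * (a/b))) = 0 := by
  have hb : 0 < b := ha.trans hab
  have key : a * (1 - a/b) + (b - a) * (-(a/b)) = 0 := by field_simp; ring
  set c : ℝ := (a * (1 - a/b)) ^ (-(1/2):ℝ)
  linear_combination c * key

private lemma alg_cube {a b : ℝ} (ha : 0 < a) (hab : a < b) :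
    a * ((a * (1 - a/b)) ^ (-(1/2):ℝ) * (1 - a/b))^3
      + (b - a) * (-((a * (1 - a/b)) ^ (-(1/2):ℝ) * (a/b)))^3
      = a ^ (-(1/2):ℝ) * (1 - a/b) ^ (-(3/2):ℝ) *
          (1 - 3 * (a/b) + 2 * (a/b)^2) := by
  have hb : 0 < b := ha.trans hab
  have hr : 0 < 1 - a/b := by
    have := (div_lt_one hb).mpr hab; linarith
  have hX : 0 < a * (1 - a/b) := by positivity
  set c : ℝ := (a * (1 - a/b)) ^ (-(1/2):ℝ) with hc
  have hc3 : c^3 = a ^ (-(1/2):ℝ) * a⁻¹ * (1 - a/b) ^ (-(3/2):ℝ) := by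
    rw [hc, ← Real.rpow_natCast ((a * (1 - a/b)) ^ (-(1/2):ℝ)) 3,
      ← Real.rpow_mul hX.le]
    rw [show (-(1/2):ℝ) * ((3:ℕ):ℝ) = -(3/2) by push_cast; norm_num,
      Real.mul_rpow ha.le hr.le]
    congr 1
    rw [show (-(3/2):ℝ) = -(1/2) + (-1) by norm_num, Real.rpow_add ha,
      Real.rpow_neg_one]
  have hkey : a⁻¹ * (a * (1 - a/b)^3 - (b - a) * (a/b)^3)
      = 1 - 3 * (a/b) + 2 * (a/b)^2 := by
    field_simp; ring
  calc a * (c * (1 - a/b))^3 + (b - a) * (-(c * (a/b)))^3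
      = c^3 * (a * (1 - a/b)^3 - (b - a) * (a/b)^3) := by ring
    _ = (a ^ (-(1/2):ℝ) * (1 - a/b) ^ (-(3/2):ℝ)) *
          (a⁻¹ * (a * (1 - a/b)^3 - (b - a) * (a/b)^3)) := by rw [hc3]; ring
    _ = _ := by rw [hkey]

private lemma alg_const {a b : ℝ} (ha : 0 < a) (hab : a < b) :
    (a * (1 - a/b)) ^ (-(1/2):ℝ) * (1 - a/b)
      = a ^ (-(1/2):ℝ) * (1 - a/b) ^ ((1/2):ℝ) := by
  have hb : 0 < b := ha.trans hab
  have hr : 0 < 1 - a/b := by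
    have := (div_lt_one hb).mpr hab; linarith
  rw [Real.mul_rpow ha.le hr.le, mul_assoc]
  congr 1
  nth_rewrite 2 [← Real.rpow_one (1 - a/b)]
  rw [← Real.rpow_add hr]
  norm_num

private lemma Bsub {U : Type*} (B : ℕ → Finset U) (hmono : ∀ i, B i ⊆ B (i + 1)) :
    ∀ {m n : ℕ}, m ≤ n → B m ⊆ B n := by
  intro m n h
  induction n with
  | zero => have : m = 0 := by omega
            subst this; exact subset_rfl
  | succ n ih =>
    rcases Nat.lt_or_ge m (n+1) with h' | h'
    · exact (ih (by omega)).trans (hmono n)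
    · have : m = n + 1 := by omega
      subst this; exact subset_rfl

section Helpers
variable {U : Type*} [DecidableEq U]
  {B : ℕ → Finset U} (hmono : ∀ i, B i ⊆ B (i + 1))
  {N : ℕ → ℕ} (hN : ∀ i, N i = (B i).card) (hNs : StrictMono N)
  (hNpos : ∀ m, 0 < N m)
  {φ : ℕ → U → ℝ}
  (hφ : ∀ i x, φ (i + 1) x =
    ((N i : ℝ) * (1 - (N i : ℝ) / N (i + 1))) ^ (-(1/2) : ℝ) *
      ((if x ∈ B i then (1:ℝ) else 0) -
        ((N i : ℝ) / N (i + 1)) * (if x ∈ B (i + 1) then (1:ℝ) else 0)))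

include hmono hφ in
private lemma phi_mem {n : ℕ} {x : U} (hx : x ∈ B n) :
    φ (n+1) x = ((N n : ℝ) * (1 - (N n : ℝ) / N (n+1))) ^ (-(1/2) : ℝ)
      * (1 - (N n : ℝ) / N (n+1)) := by
  rw [hφ, if_pos hx, if_pos (hmono n hx)]
  ring

include hφ in
private lemma phi_sdiff {n : ℕ} {x : U} (hx : x ∈ B (n+1)) (hx' : x ∉ B n) :
    φ (n+1) x = -(((N n : ℝ) * (1 - (N n : ℝ) / N (n+1))) ^ (-(1/2) : ℝ)
      * ((N n : ℝ) / N (n+1))) := by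
  rw [hφ, if_neg hx', if_pos hx]
  ring

include hmono hφ in
private lemma phi_nmem {n : ℕ} {x : U} (hx : x ∉ B (n+1)) :
    φ (n+1) x = 0 := by
  rw [hφ, if_neg (fun h => hx (hmono n h)), if_neg hx]
  ring

include hmono hN hφ in
private lemma key_sum (n : ℕ) (v : ℝ → ℝ) :
    ∑ x ∈ B (n+1), v (φ (n+1) x)
      = (N n : ℝ) * v (((N n : ℝ) * (1 - (N n : ℝ) / N (n+1))) ^ (-(1/2) : ℝ)
          * (1 - (N n : ℝ) / N (n+1)))
        + ((N (n+1) : ℝ) - (N n : ℝ)) *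
          v (-(((N n : ℝ) * (1 - (N n : ℝ) / N (n+1))) ^ (-(1/2) : ℝ)
            * ((N n : ℝ) / N (n+1)))) := by
  rw [← Finset.sum_sdiff (hmono n)]
  have h1 : ∑ x ∈ B n, v (φ (n+1) x)
      = (N n : ℝ) * v (((N n : ℝ) * (1 - (N n : ℝ) / N (n+1))) ^ (-(1/2) : ℝ)
          * (1 - (N n : ℝ) / N (n+1))) := by
    rw [Finset.sum_congr rfl (fun x hx => by rw [phi_mem hmono hφ hx]),
      Finset.sum_const, ← hN n, nsmul_eq_mul]
  have h2 : ∑ x ∈ B (n+1) \ B n, v (φ (n+1) x)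
      = ((N (n+1) : ℝ) - (N n : ℝ)) *
          v (-(((N n : ℝ) * (1 - (N n : ℝ) / N (n+1))) ^ (-(1/2) : ℝ)
            * ((N n : ℝ) / N (n+1)))) := by
    rw [Finset.sum_congr rfl (fun x hx => by
        rw [phi_sdiff hφ (Finset.mem_sdiff.mp hx).1 (Finset.mem_sdiff.mp hx).2]),
      Finset.sum_const, Finset.card_sdiff_of_subset (hmono n), nsmul_eq_mul,
      Nat.cast_sub (Finset.card_le_card (hmono n)), ← hN n, ← hN (n+1)]
  rw [h1, h2]
  ring

include hmono hN hNs hNpos hφ in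
private lemma sum_phi_zero (n : ℕ) :
    ∑ x ∈ B (n+1), φ (n+1) x = 0 := by
  have ha : (0:ℝ) < N n := by exact_mod_cast hNpos n
  have hab : (N n:ℝ) < N (n+1) := by exact_mod_cast hNs (Nat.lt_succ_self n)
  have h := key_sum hmono hN hφ n (fun t => t)
  rw [h]
  exact alg_id ha hab

include hmono hN hNs hNpos hφ in
private lemma sum_phi_sq (n : ℕ) :
    ∑ x ∈ B (n+1), (φ (n+1) x)^2 = 1 := by
  have ha : (0:ℝ) < N n := by exact_mod_cast hNpos n
  have hab : (N n:ℝ) < N (n+1) := by exact_mod_cast hNs (Nat.lt_succ_self n)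
  have h := key_sum hmono hN hφ n (fun t => t^2)
  rw [h]
  exact alg_sq ha hab

include hmono hN hNs hNpos hφ in
private lemma L4 (k : ℕ) (hk : 1 ≤ k) :
    ∑' x : U, φ k x * φ k x * φ k x
      = (N (k-1):ℝ)^(-(1/2):ℝ) * (1 - (N (k-1):ℝ)/N k)^(-(3/2):ℝ) *
          (1 - 3*((N (k-1):ℝ)/N k) + 2*((N (k-1):ℝ)/N k)^2) := by
  obtain ⟨n, rfl⟩ : ∃ n, k = n+1 := ⟨k-1, by omega⟩
  simp only [Nat.add_sub_cancel]
  have ha : (0:ℝ) < N n := by exact_mod_cast hNpos n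
  have hab : (N n:ℝ) < N (n+1) := by exact_mod_cast hNs (Nat.lt_succ_self n)
  rw [tsum_eq_sum (s := B (n+1))
    (fun x hx => by rw [phi_nmem hmono hφ hx]; ring)]
  have hs : ∑ x ∈ B (n+1), φ (n+1) x * φ (n+1) x * φ (n+1) x
      = ∑ x ∈ B (n+1), (φ (n+1) x)^3 :=
    Finset.sum_congr rfl (fun x _ => by ring)
  have h := key_sum hmono hN hφ n (fun t => t^3)
  rw [hs, h]
  exact alg_cube ha hab

include hmono hN hNs hNpos hφ in
private lemma L2 (m p : ℕ) (hm : 1 ≤ m) (hmp : m < p) :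
    ∑' x : U, φ m x * φ m x * φ p x
      = (N (p-1):ℝ)^(-(1/2):ℝ) * (1 - (N (p-1):ℝ)/N p)^((1/2):ℝ) := by
  obtain ⟨n, rfl⟩ : ∃ n, m = n+1 := ⟨m-1, by omega⟩
  obtain ⟨q, rfl⟩ : ∃ q, p = q+1 := ⟨p-1, by omega⟩
  simp only [Nat.add_sub_cancel]
  have haq : (0:ℝ) < N q := by exact_mod_cast hNpos q
  have habq : (N q:ℝ) < N (q+1) := by exact_mod_cast hNs (Nat.lt_succ_self q)
  have hsub : B (n+1) ⊆ B q := Bsub B hmono (by omega)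
  rw [tsum_eq_sum (s := B (n+1))
    (fun x hx => by rw [phi_nmem hmono hφ hx]; ring)]
  calc ∑ x ∈ B (n+1), φ (n+1) x * φ (n+1) x * φ (q+1) x
      = (∑ x ∈ B (n+1), (φ (n+1) x)^2) *
          (((N q : ℝ) * (1 - (N q : ℝ) / N (q+1))) ^ (-(1/2) : ℝ)
            * (1 - (N q : ℝ) / N (q+1))) := by
        rw [Finset.sum_mul]
        exact Finset.sum_congr rfl (fun x hx => by
          rw [phi_mem hmono hφ (hsub hx)]; ring)
    _ = _ := by
        rw [sum_phi_sq hmono hN hNs hNpos hφ n, one_mul]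
        exact alg_const haq habq

include hmono hN hNs hNpos hφ in
private lemma L1 (m p q : ℕ) (hm : 1 ≤ m) (hp : m < p) (hq : m < q) :
    ∑' x : U, φ m x * φ p x * φ q x = 0 := by
  obtain ⟨n, rfl⟩ : ∃ n, m = n+1 := ⟨m-1, by omega⟩
  obtain ⟨p', rfl⟩ : ∃ p', p = p'+1 := ⟨p-1, by omega⟩
  obtain ⟨q', rfl⟩ : ∃ q', q = q'+1 := ⟨q-1, by omega⟩
  have hsubp : B (n+1) ⊆ B p' := Bsub B hmono (by omega)
  have hsubq : B (n+1) ⊆ B q' := Bsub B hmono (by omega)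
  rw [tsum_eq_sum (s := B (n+1))
    (fun x hx => by rw [phi_nmem hmono hφ hx]; ring)]
  calc ∑ x ∈ B (n+1), φ (n+1) x * φ (p'+1) x * φ (q'+1) x
      = (∑ x ∈ B (n+1), φ (n+1) x) *
          ((((N p' : ℝ) * (1 - (N p' : ℝ) / N (p'+1))) ^ (-(1/2) : ℝ)
            * (1 - (N p' : ℝ) / N (p'+1))) *
           (((N q' : ℝ) * (1 - (N q' : ℝ) / N (q'+1))) ^ (-(1/2) : ℝ)
            * (1 - (N q' : ℝ) / N (q'+1)))) := by
        rw [Finset.sum_mul]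
        exact Finset.sum_congr rfl (fun x hx => by
          rw [phi_mem hmono hφ (hsubp hx), phi_mem hmono hφ (hsubq hx)]; ring)
    _ = 0 := by rw [sum_phi_zero hmono hN hNs hNpos hφ n, zero_mul]

end Helpers
theorem stmt17 {U : Type*} [DecidableEq U] [Countable U]
    (B : ℕ → Finset U) (hmono : ∀ i, B i ⊆ B (i + 1))
    (x₀ : U) (hB0 : B 0 = {x₀})
    (N : ℕ → ℕ) (hN : ∀ i, N i = (B i).card) (hNs : StrictMono N)
    (φ : ℕ → U → ℝ)
    (hφ : ∀ i x, φ (i + 1) x =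
      ((N i : ℝ) * (1 - (N i : ℝ) / N (i + 1))) ^ (-(1/2) : ℝ) *
        ((if x ∈ B i then (1:ℝ) else 0) -
          ((N i : ℝ) / N (i + 1)) * (if x ∈ B (i + 1) then (1:ℝ) else 0)))
    (i j k : ℕ) (hi : 1 ≤ i) (hj : 1 ≤ j) (hk : 1 ≤ k) :
    (∑' x : U, φ i x * φ j x * φ k x) =
      (if i = j ∧ j = k then
        (N (k - 1) : ℝ) ^ (-(1/2) : ℝ) * (1 - (N (k - 1) : ℝ) / N k) ^ (-(3/2) : ℝ) *
          (1 - 3 * ((N (k - 1) : ℝ) / N k) + 2 * ((N (k - 1) : ℝ) / N k) ^ 2)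
       else 0)
      + (if i = j ∧ i < k then
          (N (k - 1) : ℝ) ^ (-(1/2) : ℝ) * (1 - (N (k - 1) : ℝ) / N k) ^ ((1/2) : ℝ) else 0)
      + (if i = k ∧ i < j then
          (N (j - 1) : ℝ) ^ (-(1/2) : ℝ) * (1 - (N (j - 1) : ℝ) / N j) ^ ((1/2) : ℝ) else 0)
      + (if j = k ∧ j < i then
          (N (i - 1) : ℝ) ^ (-(1/2) : ℝ) * (1 - (N (i - 1) : ℝ) / N i) ^ ((1/2) : ℝ) else 0) := by
  have hNpos : ∀ m, 0 < N m := by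
    intro m
    have h0 : N 0 = 1 := by rw [hN, hB0]; simp
    have := hNs.monotone (Nat.zero_le m)
    omega
  by_cases hij : i = j
  · subst hij
    by_cases hik : i = k
    · subst hik
      rw [L4 hmono hN hNs hNpos hφ i hi]
      simp
    · by_cases h2 : i < k
      · rw [L2 hmono hN hNs hNpos hφ i k hi h2]
        simp [h2, hik]
      · have h3 : k < i := by omega
        have h4 : ¬ i < k := by omega
        have ht : ∑' x : U, φ i x * φ i x * φ k x
            = ∑' x : U, φ k x * φ i x * φ i x := tsum_congr (fun x => by ring)
        rw [ht, L1 hmono hN hNs hNpos hφ k i i hk h3 h3]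
        simp [hik, h4, fun h : k = i => hik h.symm]
  · by_cases hik : i = k
    · subst hik
      by_cases h2 : i < j
      · have ht : ∑' x : U, φ i x * φ j x * φ i x
            = ∑' x : U, φ i x * φ i x * φ j x := tsum_congr (fun x => by ring)
        rw [ht, L2 hmono hN hNs hNpos hφ i j hi h2]
        have hc4 : ¬ (j = i ∧ j < i) := by omega
        simp [h2, hij, hc4]
      · have h3 : j < i := by omega
        have h4 : ¬ i < j := by omega
        have ht : ∑' x : U, φ i x * φ j x * φ i x
            = ∑' x : U, φ j x * φ i x * φ i x := tsum_congr (fun x => by ring)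
        rw [ht, L1 hmono hN hNs hNpos hφ j i i hj h3 h3]
        have hc4 : ¬ (j = i ∧ j < i) := by omega
        simp [hij, h4, hc4]
    · by_cases hjk : j = k
      · subst hjk
        by_cases h2 : j < i
        · have ht : ∑' x : U, φ i x * φ j x * φ j x
            = ∑' x : U, φ j x * φ j x * φ i x := tsum_congr (fun x => by ring)
          rw [ht, L2 hmono hN hNs hNpos hφ j i hj h2]
          have h4 : ¬ i < j := by omega
          simp [h2, hij, hik, h4]
        · have h3 : i < j := by omega
          rw [L1 hmono hN hNs hNpos hφ i j j hi h3 h3]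
          have h4 : ¬ j < i := by omega
          simp [hij, hik, h4]
      · have hc1 : ¬ (i = j ∧ j = k) := by omega
        have hc2 : ¬ (i = j ∧ i < k) := by omega
        have hc3 : ¬ (i = k ∧ i < j) := by omega
        have hc4 : ¬ (j = k ∧ j < i) := by omega
        rw [if_neg hc1, if_neg hc2, if_neg hc3, if_neg hc4]
        rcases Nat.lt_trichotomy i j with h1 | h1 | h1
        · rcases Nat.lt_trichotomy i k with h2 | h2 | h2
          · rw [L1 hmono hN hNs hNpos hφ i j k hi h1 h2]
            ring
          · omega
          · have ht : ∑' x : U, φ i x * φ j x * φ k x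
              = ∑' x : U, φ k x * φ i x * φ j x := tsum_congr (fun x => by ring)
            rw [ht, L1 hmono hN hNs hNpos hφ k i j hk h2 (by omega)]
            ring
        · omega
        · rcases Nat.lt_trichotomy j k with h2 | h2 | h2
          · have ht : ∑' x : U, φ i x * φ j x * φ k x
              = ∑' x : U, φ j x * φ i x * φ k x := tsum_congr (fun x => by ring)
            rw [ht, L1 hmono hN hNs hNpos hφ j i k hj h1 h2]
            ring
          · omega
          · have ht : ∑' x : U, φ i x * φ j x * φ k x
              = ∑' x : U, φ k x * φ i x * φ j x := tsum_congr (fun x => by ring)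
            rw [ht, L1 hmono hN hNs hNpos hφ k i j hk (by omega) (by omega)]
            ring
end
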